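/- arXiv:2509.02021 — 10 statements merged into one kernel-verified Lean document; each statement's English description precedes it below -/
import Mathlib

section
/- Let G be a connected graph containing a path s0 s1 s2 s3 s4 (five distinct vertices, consecutive ones adjacent) such that in G the degrees satisfy d(s0) ≥ 3, d(s4) ≥ 3, and d(s1) = d(s2) = d(s3) = 2. Then G has no homeomorphically irreducible spanning tree. -/
open Matrix

/-- Spectral radius: the supremum of real eigenvalues of the adjacency matrix. -/
noncomputable def specRad {V : Type*} [Fintype V] (G : SimpleGraph V) : ℝ :=
  letI := Classical.decEq V
  letI := Classical.decRel G.Adj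
  sSup {x : ℝ | ∃ f : V → ℝ, f ≠ 0 ∧ (SimpleGraph.adjMatrix ℝ G) *ᵥ f = x • f}

/-- `G` has a homeomorphically irreducible spanning tree. -/
def HasHIST {V : Type*} (G : SimpleGraph V) : Prop :=
  ∃ T : SimpleGraph V, T ≤ G ∧ T.IsTree ∧ ∀ v, (T.neighborSet v).ncard ≠ 2

/-- The graph `L n`: a clique on indices `2,…,n-1` with a pendant path `2 — 1 — 0`. -/
def Ln (n : ℕ) : SimpleGraph (Fin n) :=
  SimpleGraph.fromRel (fun a b =>
    (2 ≤ a.val ∧ 2 ≤ b.val) ∨ (a.val = 0 ∧ b.val = 1) ∨ (a.val = 1 ∧ b.val = 2))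

/-- The graph `B n`: a clique on indices `3,…,n-1`, a path `0 — 1 — 2`, where `0`
is joined to clique vertex `3` and `2` is joined to clique vertex `4`. -/
def Bn (n : ℕ) : SimpleGraph (Fin n) :=
  SimpleGraph.fromRel (fun a b =>
    (3 ≤ a.val ∧ 3 ≤ b.val) ∨ (a.val = 0 ∧ b.val = 1) ∨ (a.val = 1 ∧ b.val = 2) ∨
    (a.val = 0 ∧ b.val = 3) ∨ (a.val = 2 ∧ b.val = 4))

/-- `G` is 2-connected. -/
def TwoConnected {V : Type*} [Fintype V] (G : SimpleGraph V) : Prop :=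
  3 ≤ Fintype.card V ∧ ∀ v : V, (SimpleGraph.induce {u | u ≠ v} G).Connected


private lemma nbr_eq_pair {V : Type*} [Fintype V] (G : SimpleGraph V) {v a b : V}
    (ha : G.Adj v a) (hb : G.Adj v b) (hab : a ≠ b)
    (h2 : (G.neighborSet v).ncard = 2) : G.neighborSet v = {a, b} := by
  symm
  apply Set.eq_of_subset_of_ncard_le
  · intro x hx
    rcases hx with h | h
    · subst h; exact ha
    · simp only [Set.mem_singleton_iff] at h; subst h; exact hb
  · rw [h2, Set.ncard_pair hab]
  · exact Set.toFinite _

private lemma walk_closed {V : Type*} {T : SimpleGraph V} (S : V → Prop)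
    (hS : ∀ a, S a → ∀ b, T.Adj a b → S b) :
    ∀ {u v : V}, S u → T.Walk u v → S v := by
  intro u v hu w
  induction w with
  | nil => exact hu
  | cons h _ ih => exact ih (hS _ hu _ h)

private lemma nbr_singleton {V : Type*} [Fintype V] {T G : SimpleGraph V} (hle : T ≤ G)
    (hconn : T.Connected) {v u : V} (huv : u ≠ v)
    (h2 : (G.neighborSet v).ncard = 2) (hne2 : (T.neighborSet v).ncard ≠ 2) :
    ∃ a, T.neighborSet v = {a} := by
  have hsub : T.neighborSet v ⊆ G.neighborSet v := fun x hx => hle hx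
  have hle2 : (T.neighborSet v).ncard ≤ 2 := by
    rw [← h2]; exact Set.ncard_le_ncard hsub (Set.toFinite _)
  have hpos : 0 < (T.neighborSet v).ncard := by
    rw [Set.ncard_pos (Set.toFinite _)]
    obtain ⟨w⟩ := hconn v u
    cases w with
    | nil => exact absurd rfl huv
    | cons h _ => exact ⟨_, h⟩
  exact Set.ncard_eq_one.mp (by omega)

theorem path_P5_inner_degree_two_no_HIST {V : Type*} [Fintype V] (G : SimpleGraph V)
    (hG : G.Connected) (s0 s1 s2 s3 s4 : V)
    (hnodup : ([s0, s1, s2, s3, s4] : List V).Nodup)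
    (h01 : G.Adj s0 s1) (h12 : G.Adj s1 s2) (h23 : G.Adj s2 s3) (h34 : G.Adj s3 s4)
    (hd0 : 3 ≤ (G.neighborSet s0).ncard) (hd4 : 3 ≤ (G.neighborSet s4).ncard)
    (hd1 : (G.neighborSet s1).ncard = 2) (hd2 : (G.neighborSet s2).ncard = 2)
    (hd3 : (G.neighborSet s3).ncard = 2) :
    ¬ HasHIST G := by
  rintro ⟨T, hTG, hT, hdeg⟩
  have hconn := hT.isConnected
  simp only [List.nodup_cons, List.mem_cons, List.not_mem_nil, List.mem_singleton,
    not_or, or_false] at hnodup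
  obtain ⟨⟨h01', h02, h03, h04⟩, ⟨h12', h13, h14⟩, ⟨h23', h24⟩, h34', -⟩ := hnodup
  have hN1 : G.neighborSet s1 = {s0, s2} := nbr_eq_pair G h01.symm h12 h02 hd1
  have hN2 : G.neighborSet s2 = {s1, s3} := nbr_eq_pair G h12.symm h23 h13 hd2
  have hN3 : G.neighborSet s3 = {s2, s4} := nbr_eq_pair G h23.symm h34 h24 hd3
  obtain ⟨x, hx⟩ := nbr_singleton hTG hconn h02 hd2 (hdeg s2)
  have hxmem : x ∈ G.neighborSet s2 := hTG (by rw [hx]; exact Set.mem_singleton x : x ∈ T.neighborSet s2)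
  rw [hN2] at hxmem
  rcases hxmem with hx1 | hx3
  · -- x = s1 : T-edge s1–s2, and s1's only T-neighbor is s2
    rw [hx1] at hx
    have hadj : T.Adj s1 s2 := (by rw [hx]; exact Set.mem_singleton _ : s1 ∈ T.neighborSet s2).symm
    obtain ⟨y, hy⟩ := nbr_singleton hTG hconn (Ne.symm h13) hd1 (hdeg s1)
    have hy2 : y = s2 := by
      have : s2 ∈ T.neighborSet s1 := hadj
      rw [hy] at this; exact this.symm
    rw [hy2] at hy
    have hclosed : ∀ a, (a = s1 ∨ a = s2) → ∀ b, T.Adj a b → (b = s1 ∨ b = s2) := by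
      rintro a (rfl | rfl) b hab
      · right; have : b ∈ T.neighborSet a := hab; rw [hy] at this; exact this
      · left; have : b ∈ T.neighborSet a := hab; rw [hx] at this; exact this
    obtain ⟨w⟩ := hconn s1 s0
    have := walk_closed _ hclosed (Or.inl rfl) w
    rcases this with h | h
    · exact h01' h
    · exact h02 h
  · -- x = s3 : T-edge s2–s3, and s3's only T-neighbor is s2
    simp only [Set.mem_singleton_iff] at hx3
    rw [hx3] at hx
    have hadj : T.Adj s3 s2 := (by rw [hx]; exact Set.mem_singleton _ : s3 ∈ T.neighborSet s2).symm
    obtain ⟨y, hy⟩ := nbr_singleton hTG hconn h03 hd3 (hdeg s3)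
    have hy2 : y = s2 := by
      have : s2 ∈ T.neighborSet s3 := hadj
      rw [hy] at this; exact this.symm
    rw [hy2] at hy
    have hclosed : ∀ a, (a = s2 ∨ a = s3) → ∀ b, T.Adj a b → (b = s2 ∨ b = s3) := by
      rintro a (rfl | rfl) b hab
      · right; have : b ∈ T.neighborSet a := hab; rw [hx] at this; exact this
      · left; have : b ∈ T.neighborSet a := hab; rw [hy] at this; exact this
    obtain ⟨w⟩ := hconn s2 s0
    have := walk_closed _ hclosed (Or.inl rfl) w
    rcases this with h | h
    · exact h02 h
    · exact h03 h
end

section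
/- For n ≥ 5, the graph L_n (obtained from the complete graph K_{n-2} together with a path P_2, by joining one endpoint of the P_2 to one vertex of K_{n-2}) contains no homeomorphically irreducible spanning tree. -/
open Matrix

theorem Ln_no_HIST (n : ℕ) (hn : 5 ≤ n) : ¬ HasHIST (Ln n) := by
  rintro ⟨T, hle, hT, hdeg⟩
  have v0 : Fin n := ⟨0, by omega⟩
  set v0 : Fin n := ⟨0, by omega⟩ with hv0
  set v1 : Fin n := ⟨1, by omega⟩ with hv1
  set v2 : Fin n := ⟨2, by omega⟩ with hv2
  set v4 : Fin n := ⟨4, by omega⟩ with hv4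
  -- From Ln adjacency: neighbors of a vertex with value ≤ 1
  have hLn : ∀ v u : Fin n, T.Adj v u → v.val ≤ 1 →
      (v.val = 0 ∧ u.val = 1) ∨ (v.val = 1 ∧ (u.val = 0 ∨ u.val = 2)) := by
    intro v u h hv
    have h' := hle h
    rw [Ln, SimpleGraph.fromRel_adj] at h'
    obtain ⟨hne, hr⟩ := h'
    rcases hr with (⟨a,b⟩|⟨a,b⟩|⟨a,b⟩)|(⟨a,b⟩|⟨a,b⟩|⟨a,b⟩) <;> omega
  -- connectivity of T
  have hconn := hT.isConnected
  obtain ⟨w0⟩ := hconn v0 v4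
  -- first edge from v0 shows T.Adj v0 v1
  have hadj01 : T.Adj v0 v1 := by
    have hnil : ¬ w0.Nil := SimpleGraph.Walk.not_nil_of_ne (by simp [hv0, hv4, Fin.ext_iff])
    have h : T.Adj v0 (w0.getVert 1) := w0.adj_snd hnil
    rcases hLn v0 _ h (by simp [hv0]) with ⟨_, h1⟩ | ⟨h1, _⟩
    · have hu : w0.getVert 1 = v1 := Fin.ext (by simpa [hv1] using h1)
      rwa [hu] at h
    · simp [hv0] at h1
  -- vertex v1 cannot also be adjacent to v2
  have hnot12 : ¬ T.Adj v1 v2 := by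
    intro h12
    apply hdeg v1
    have hset : T.neighborSet v1 = {v0, v2} := by
      ext u
      constructor
      · intro hu
        rcases hLn v1 u hu (by simp [hv1]) with ⟨h1, _⟩ | ⟨_, h1 | h1⟩
        · simp [hv1] at h1
        · exact Or.inl (Fin.ext (by simpa [hv0] using h1))
        · exact Or.inr (Fin.ext (by simpa [hv2] using h1))
      · rintro (rfl | rfl)
        · exact hadj01.symm
        · exact h12
    rw [hset, Set.ncard_pair (by simp [hv0, hv2, Fin.ext_iff])]
  -- walk invariant: from v0 we can only reach values ≤ 1
  have key : ∀ (v w : Fin n) (p : T.Walk v w), v.val ≤ 1 → w.val ≤ 1 := by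
    intro v w p
    induction p with
    | nil => exact id
    | cons h' p' ih =>
      rename_i a b c
      intro hv
      apply ih
      rcases hLn a b h' hv with ⟨_, h1⟩ | ⟨ha, h1 | h1⟩
      · omega
      · omega
      · exfalso
        apply hnot12
        have hab : a = v1 := Fin.ext (by simpa [hv1] using ha)
        have hbb : b = v2 := Fin.ext (by simpa [hv2] using h1)
        rwa [hab, hbb] at h'
  obtain ⟨w'⟩ := hconn v0 v4
  have := key v0 v4 w' (by simp [hv0])
  simp [hv4] at this
end

section
/- For n ≥ 6, the graph B_n (obtained from the complete graph K_{n-3} together with a path P_3, by joining the two endpoints of the P_3 to two distinct vertices of K_{n-3}) contains no homeomorphically irreducible spanning tree. -/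
open Matrix

theorem Bn_no_HIST (n : ℕ) (hn : 6 ≤ n) : ¬ HasHIST (Bn n) := by
  rintro ⟨T, hle, hTree, hdeg⟩
  have step : ∀ a b : Fin n, T.Adj a b →
      (a.val = 1 → b.val = 0 ∨ b.val = 2) ∧
      (a.val = 0 → b.val = 1 ∨ b.val = 3) ∧
      (a.val = 2 → b.val = 1 ∨ b.val = 4) := by
    intro a b h
    have h' : (Bn n).Adj a b := hle h
    simp only [Bn, SimpleGraph.fromRel_adj] at h'
    obtain ⟨hne, hr⟩ := h'
    have hne' : a.val ≠ b.val := fun hv => hne (Fin.ext hv)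
    refine ⟨fun ha => ?_, fun ha => ?_, fun ha => ?_⟩ <;> omega
  have pairlem : ∀ v a b : Fin n, T.Adj v a → T.Adj v b → a ≠ b →
      (∀ c, T.Adj v c → c = a ∨ c = b) → False := by
    intro v a b haa hbb hab hall
    have hS : T.neighborSet v = {a, b} := by
      ext c
      simp only [SimpleGraph.mem_neighborSet, Set.mem_insert_iff, Set.mem_singleton_iff]
      constructor
      · intro hc; exact hall c hc
      · rintro (rfl | rfl)
        · exact haa
        · exact hbb
    have h2 := hdeg v
    rw [hS, Set.ncard_pair hab] at h2
    exact h2 rfl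
  set v1 : Fin n := ⟨1, by omega⟩ with hv1
  set v5 : Fin n := ⟨5, by omega⟩ with hv5
  have hv1val : v1.val = 1 := rfl
  have hv5val : v5.val = 5 := rfl
  obtain ⟨w⟩ := hTree.isConnected.preconnected v1 v5
  have hne15 : v1 ≠ v5 := by
    intro h
    have := congrArg Fin.val h
    rw [hv1val, hv5val] at this
    omega
  obtain ⟨x, hx⟩ : ∃ x, T.Adj v1 x :=
    ⟨_, w.adj_snd (SimpleGraph.Walk.not_nil_of_ne hne15)⟩
  have hxval := (step v1 x hx).1 hv1val
  rcases hxval with hx0 | hx2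
  · -- x.val = 0 : edges 1-2 and 0-3 are absent from T
    have hnot2 : ∀ b : Fin n, T.Adj v1 b → b.val = 0 := by
      intro b hb
      rcases (step v1 b hb).1 hv1val with h | h
      · exact h
      · exfalso
        refine pairlem v1 x b hx hb (fun he => ?_) (fun c hc => ?_)
        · rw [he] at hx0; omega
        · rcases (step v1 c hc).1 hv1val with h' | h'
          · exact Or.inl (Fin.ext (h'.trans hx0.symm))
          · exact Or.inr (Fin.ext (h'.trans h.symm))
    have hnot3 : ∀ b : Fin n, T.Adj x b → b.val = 1 := by
      intro b hb
      rcases (step x b hb).2.1 hx0 with h | h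
      · exact h
      · exfalso
        refine pairlem x v1 b hx.symm hb (fun he => ?_) (fun c hc => ?_)
        · rw [← he] at h; rw [hv1val] at h; omega
        · rcases (step x c hc).2.1 hx0 with h' | h'
          · exact Or.inl (Fin.ext (h'.trans hv1val.symm))
          · exact Or.inr (Fin.ext (h'.trans h.symm))
    have key : ∀ a b : Fin n, T.Walk a b → a.val = 0 ∨ a.val = 1 →
        b.val = 0 ∨ b.val = 1 := by
      intro a b w
      induction w with
      | nil => exact id
      | cons h p ih =>
        intro ha
        apply ih
        rcases ha with h0 | h1
        · have hax : _ = x := Fin.ext (h0.trans hx0.symm)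
          rw [hax] at h
          exact Or.inr (hnot3 _ h)
        · have hav : _ = v1 := Fin.ext (h1.trans hv1val.symm)
          rw [hav] at h
          exact Or.inl (hnot2 _ h)
    rcases key v1 v5 w (Or.inr hv1val) with h | h <;> rw [hv5val] at h <;> omega
  · -- x.val = 2 : edges 0-1 and 2-4 are absent from T
    have hnot0 : ∀ b : Fin n, T.Adj v1 b → b.val = 2 := by
      intro b hb
      rcases (step v1 b hb).1 hv1val with h | h
      · exfalso
        refine pairlem v1 x b hx hb (fun he => ?_) (fun c hc => ?_)
        · rw [he] at hx2; omega
        · rcases (step v1 c hc).1 hv1val with h' | h'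
          · exact Or.inr (Fin.ext (h'.trans h.symm))
          · exact Or.inl (Fin.ext (h'.trans hx2.symm))
      · exact h
    have hnot4 : ∀ b : Fin n, T.Adj x b → b.val = 1 := by
      intro b hb
      rcases (step x b hb).2.2 hx2 with h | h
      · exact h
      · exfalso
        refine pairlem x v1 b hx.symm hb (fun he => ?_) (fun c hc => ?_)
        · rw [← he] at h; rw [hv1val] at h; omega
        · rcases (step x c hc).2.2 hx2 with h' | h'
          · exact Or.inl (Fin.ext (h'.trans hv1val.symm))
          · exact Or.inr (Fin.ext (h'.trans h.symm))
    have key : ∀ a b : Fin n, T.Walk a b → a.val = 2 ∨ a.val = 1 →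
        b.val = 2 ∨ b.val = 1 := by
      intro a b w
      induction w with
      | nil => exact id
      | cons h p ih =>
        intro ha
        apply ih
        rcases ha with h0 | h1
        · have hax : _ = x := Fin.ext (h0.trans hx2.symm)
          rw [hax] at h
          exact Or.inr (hnot4 _ h)
        · have hav : _ = v1 := Fin.ext (h1.trans hv1val.symm)
          rw [hav] at h
          exact Or.inl (hnot0 _ h)
    rcases key v1 v5 w (Or.inr hv1val) with h | h <;> rw [hv5val] at h <;> omega
end

section
/- The spectral radius ρ of the graph L_n satisfies ρ^4 − (n−4)ρ^3 − (n−1)ρ^2 + (2n−8)ρ + (n−3) = 0. -/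
open Matrix

section general
variable {m : ℕ} (G : SimpleGraph (Fin m)) [DecidableRel G.Adj]

lemma herm : (G.adjMatrix ℝ).IsHermitian := by
  ext i j
  simp [Matrix.conjTranspose_apply, SimpleGraph.adjMatrix_apply, SimpleGraph.adj_comm]

lemma eval_charpoly_eq (x : ℝ) :
    ((G.adjMatrix ℝ).charpoly).eval x = (x • (1 : Matrix (Fin m) (Fin m) ℝ) - G.adjMatrix ℝ).det := by
  rw [Matrix.charpoly, eval_det]
  congr 1
  ext i j
  rw [matPolyEquiv_eval]
  by_cases h : i = j
  · subst h
    simp [Matrix.charmatrix_apply_eq]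
  · simp only [Matrix.charmatrix_apply_ne _ _ _ h, Matrix.sub_apply, Matrix.smul_apply,
      Matrix.one_apply_ne h, Polynomial.eval_neg, Polynomial.eval_C, smul_zero, zero_sub]

lemma eigSet_finite :
    {x : ℝ | ∃ f : Fin m → ℝ, f ≠ 0 ∧ (SimpleGraph.adjMatrix ℝ G) *ᵥ f = x • f}.Finite := by
  apply Set.Finite.subset (((G.adjMatrix ℝ).charpoly.roots.toFinset : Finset ℝ).finite_toSet)
  rintro x ⟨f, hf, hAf⟩
  have : (x • (1 : Matrix (Fin m) (Fin m) ℝ) - G.adjMatrix ℝ).det = 0 := by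
    rw [← Matrix.exists_mulVec_eq_zero_iff]
    refine ⟨f, hf, ?_⟩
    rw [Matrix.sub_mulVec, Matrix.smul_mulVec, Matrix.one_mulVec, hAf, sub_self]
  simp only [Finset.coe_sort_coe, Multiset.mem_toFinset, Finset.mem_coe,
    Polynomial.mem_roots ((G.adjMatrix ℝ).charpoly_monic.ne_zero)]
  simpa [Polynomial.IsRoot, eval_charpoly_eq] using this

lemma eigSet_nonempty (hm : 0 < m) :
    {x : ℝ | ∃ f : Fin m → ℝ, f ≠ 0 ∧ (SimpleGraph.adjMatrix ℝ G) *ᵥ f = x • f}.Nonempty := by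
  have h := (herm G).mulVec_eigenvectorBasis ⟨0, hm⟩
  exact ⟨(herm G).eigenvalues ⟨0, hm⟩, ⇑((herm G).eigenvectorBasis ⟨0, hm⟩),
    (WithLp.ofLp_eq_zero _).not.mpr ((herm G).eigenvectorBasis.orthonormal.ne_zero _), h⟩

lemma eig_mem (i : Fin m) :
    (herm G).eigenvalues i ∈
      {x : ℝ | ∃ f : Fin m → ℝ, f ≠ 0 ∧ (SimpleGraph.adjMatrix ℝ G) *ᵥ f = x • f} :=
  ⟨_, (WithLp.ofLp_eq_zero _).not.mpr ((herm G).eigenvectorBasis.orthonormal.ne_zero i), (herm G).mulVec_eigenvectorBasis i⟩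

lemma sum_eig : ∑ i, (herm G).eigenvalues i = 0 := by
  have h := (herm G).spectral_theorem
  have : (G.adjMatrix ℝ).trace = (Matrix.diagonal (RCLike.ofReal ∘ (herm G).eigenvalues) :
      Matrix (Fin m) (Fin m) ℝ).trace := by
    conv_lhs => rw [h]
    rw [Unitary.conjStarAlgAut_apply]
    rw [Matrix.trace_mul_cycle]
    rw [Matrix.mem_unitaryGroup_iff'.mp ((herm G).eigenvectorUnitary).2, Matrix.one_mul]
  rw [SimpleGraph.trace_adjMatrix] at this
  rw [Matrix.trace_diagonal] at this
  simpa using this.symm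

end general

section LnFacts
variable {n : ℕ}

lemma Ln_adj_iff (a b : Fin n) : (Ln n).Adj a b ↔ a.val ≠ b.val ∧
    ((2 ≤ a.val ∧ 2 ≤ b.val) ∨ (a.val = 0 ∧ b.val = 1) ∨ (b.val = 0 ∧ a.val = 1) ∨
     (a.val = 1 ∧ b.val = 2) ∨ (b.val = 1 ∧ a.val = 2)) := by
  show (a ≠ b ∧ _) ↔ _
  rw [ne_eq, Fin.ext_iff]
  tauto

lemma Ln_adj0 (h0 : 0 < n) (u : Fin n) : (Ln n).Adj ⟨0, h0⟩ u ↔ u.val = 1 := by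
  rw [Ln_adj_iff]
  rw [show ((⟨0, h0⟩ : Fin n)).val = 0 from rfl]
  omega

lemma Ln_adj1 (h1 : 1 < n) (u : Fin n) : (Ln n).Adj ⟨1, h1⟩ u ↔ u.val = 0 ∨ u.val = 2 := by
  rw [Ln_adj_iff]
  rw [show ((⟨1, h1⟩ : Fin n)).val = 1 from rfl]
  omega

lemma Ln_adj2 (h2 : 2 < n) (u : Fin n) : (Ln n).Adj ⟨2, h2⟩ u ↔ u.val = 1 ∨ 3 ≤ u.val := by
  rw [Ln_adj_iff]
  rw [show ((⟨2, h2⟩ : Fin n)).val = 2 from rfl]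
  omega

lemma Ln_adj3 (h3 : 3 < n) (u : Fin n) : (Ln n).Adj ⟨3, h3⟩ u ↔ u.val = 2 ∨ 4 ≤ u.val := by
  rw [Ln_adj_iff]
  rw [show ((⟨3, h3⟩ : Fin n)).val = 3 from rfl]
  omega

lemma Ln_swap (i j : Fin n) (hi : 3 ≤ i.val) (hj : 3 ≤ j.val) (a b : Fin n) :
    (Ln n).Adj (Equiv.swap i j a) (Equiv.swap i j b) ↔ (Ln n).Adj a b := by
  have key : ∀ c : Fin n, ((Equiv.swap i j c).val = 0 ↔ c.val = 0) ∧
      ((Equiv.swap i j c).val = 1 ↔ c.val = 1) ∧ ((Equiv.swap i j c).val = 2 ↔ c.val = 2) ∧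
      (2 ≤ (Equiv.swap i j c).val ↔ 2 ≤ c.val) := by
    intro c
    rcases eq_or_ne c i with rfl | hci
    · rw [Equiv.swap_apply_left]; omega
    rcases eq_or_ne c j with rfl | hcj
    · rw [Equiv.swap_apply_right]; omega
    · rw [Equiv.swap_apply_of_ne_of_ne hci hcj]
      exact ⟨Iff.rfl, Iff.rfl, Iff.rfl, Iff.rfl⟩
  have hinj : (Equiv.swap i j a).val ≠ (Equiv.swap i j b).val ↔ a.val ≠ b.val := by
    rw [ne_eq, ← Fin.ext_iff, EmbeddingLike.apply_eq_iff_eq, Fin.ext_iff]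
  rw [Ln_adj_iff, Ln_adj_iff]
  obtain ⟨ka0, ka1, ka2, ka3⟩ := key a
  obtain ⟨kb0, kb1, kb2, kb3⟩ := key b
  rw [hinj, ka0, ka1, ka2, ka3, kb0, kb1, kb2, kb3]

lemma cardk (k : ℕ) :
    (Finset.univ.filter fun u : Fin n => k ≤ u.val).card = n - k := by
  rw [← Nat.card_Ico k n]
  apply Finset.card_bij' (i := fun (u : Fin n) _ => u.val)
    (j := fun a ha => ⟨a, (Finset.mem_Ico.mp ha).2⟩) <;> intro a ha <;>
    first
      | rfl
      | (simp only [Finset.mem_filter, Finset.mem_univ, true_and, Finset.mem_Ico] at ha ⊢; omega)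

lemma sum_ite_card (d : ℝ) (f : Fin n → ℝ) (k : ℕ)
    (hf : ∀ u : Fin n, k ≤ u.val → f u = d) :
    ∑ u : Fin n, (if k ≤ u.val then f u else 0) = (n - k : ℕ) * d := by
  rw [Finset.sum_congr rfl (fun u _ => by
    by_cases h : k ≤ u.val
    · rw [if_pos h, if_pos h, hf u h]
    · rw [if_neg h, if_neg h] : ∀ u ∈ Finset.univ,
      (if k ≤ u.val then f u else 0) = (if k ≤ u.val then d else 0))]
  rw [← Finset.sum_filter, Finset.sum_const, cardk k, nsmul_eq_mul]

lemma swap_eig [inst : DecidableRel (Ln n).Adj] {x : ℝ} {f : Fin n → ℝ}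
    (hAf : (Ln n).adjMatrix ℝ *ᵥ f = x • f) (hx : -1 < x)
    (i j : Fin n) (hi : 3 ≤ i.val) (hj : 3 ≤ j.val) : f i = f j := by
  rcases eq_or_ne i j with rfl | hij
  · rfl
  by_contra hne
  set σ := Equiv.swap i j with hσ
  have hσσ : ∀ u, σ (σ u) = u := fun u => Equiv.swap_apply_self i j u
  have hA : ∀ v u, (Ln n).adjMatrix ℝ v (σ u) = (Ln n).adjMatrix ℝ (σ v) u := by
    intro v u
    have hiff : (Ln n).Adj v (σ u) ↔ (Ln n).Adj (σ v) u := by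
      conv_lhs => rw [← hσσ v]
      exact Ln_swap i j hi hj (σ v) u
    simp only [SimpleGraph.adjMatrix_apply]
    exact if_congr hiff rfl rfl
  have hfσ : (Ln n).adjMatrix ℝ *ᵥ (f ∘ σ) = x • (f ∘ σ) := by
    funext v
    have h1 : ((Ln n).adjMatrix ℝ *ᵥ (f ∘ σ)) v = ∑ u, (Ln n).adjMatrix ℝ v u * f (σ u) := rfl
    have h2 : ∑ u, (Ln n).adjMatrix ℝ v (σ u) * f (σ (σ u))
        = ∑ u, (Ln n).adjMatrix ℝ v u * f (σ u) :=
      Equiv.sum_comp σ (fun u => (Ln n).adjMatrix ℝ v u * f (σ u))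
    rw [h1, ← h2]
    simp only [hσσ, hA]
    have h3 : ∑ u, (Ln n).adjMatrix ℝ (σ v) u * f u = ((Ln n).adjMatrix ℝ *ᵥ f) (σ v) := rfl
    rw [h3, hAf]
    simp
  set g : Fin n → ℝ := f - f ∘ σ with hg
  have hAg : (Ln n).adjMatrix ℝ *ᵥ g = x • g := by
    rw [hg, Matrix.mulVec_sub, hAf, hfσ, smul_sub]
  have hgi : g i = f i - f j := by
    simp [hg, hσ, Equiv.swap_apply_left]
  have hgj : g j = f j - f i := by
    simp [hg, hσ, Equiv.swap_apply_right]
  have hL : ((Ln n).adjMatrix ℝ *ᵥ g) i = g j := by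
    have h1 : ((Ln n).adjMatrix ℝ *ᵥ g) i = ∑ u, (Ln n).adjMatrix ℝ i u * g u := rfl
    have hpt : ∀ u ∈ Finset.univ,
        (Ln n).adjMatrix ℝ i u * g u = if u = j then g j else 0 := fun u _ => by
      rcases eq_or_ne u j with rfl | huj
      · rw [if_pos rfl]
        have hadj : (Ln n).Adj i u :=
          (Ln_adj_iff i u).mpr ⟨fun h => hij (Fin.ext h), Or.inl ⟨by omega, by omega⟩⟩
        simp [SimpleGraph.adjMatrix_apply, hadj]
      · rw [if_neg huj]
        rcases eq_or_ne u i with rfl | hui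
        · simp [SimpleGraph.adjMatrix_apply]
        · have hgu : g u = 0 := by
            simp [hg, hσ, Equiv.swap_apply_of_ne_of_ne hui huj]
          rw [hgu, mul_zero]
    rw [h1, Finset.sum_congr rfl hpt]
    simp
  have heval := congrFun hAg i
  rw [hL, Pi.smul_apply, smul_eq_mul] at heval
  have hzero : (x + 1) * (f i - f j) = 0 := by
    rw [hgi, hgj] at heval
    linarith
  rcases mul_eq_zero.mp hzero with h | h
  · linarith
  · exact hne (by linarith)

end LnFacts

theorem specRad_Ln_quartic (n : ℕ) (hn : 5 ≤ n) :
    (specRad (Ln n)) ^ 4 - ((n : ℝ) - 4) * (specRad (Ln n)) ^ 3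
      - ((n : ℝ) - 1) * (specRad (Ln n)) ^ 2
      + (2 * (n : ℝ) - 8) * specRad (Ln n) + ((n : ℝ) - 3) = 0 := by
  letI instD : DecidableRel (Ln n).Adj := Classical.decRel _
  have h0 : 0 < n := by omega
  have h1 : 1 < n := by omega
  have h2 : 2 < n := by omega
  have h3 : 3 < n := by omega
  set v0 : Fin n := ⟨0, h0⟩ with hv0
  set v1 : Fin n := ⟨1, h1⟩ with hv1
  set v2 : Fin n := ⟨2, h2⟩ with hv2
  set v3 : Fin n := ⟨3, h3⟩ with hv3
  set ρ : ℝ := specRad (Ln n) with hρdef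
  have hspec : ρ = sSup {x : ℝ | ∃ f : Fin n → ℝ,
      f ≠ 0 ∧ (SimpleGraph.adjMatrix ℝ (Ln n)) *ᵥ f = x • f} := rfl
  have hfin := eigSet_finite (Ln n)
  have hne := eigSet_nonempty (Ln n) h0
  have hmem : ρ ∈ {x : ℝ | ∃ f : Fin n → ℝ,
      f ≠ 0 ∧ (SimpleGraph.adjMatrix ℝ (Ln n)) *ᵥ f = x • f} :=
    hspec ▸ Set.Nonempty.csSup_mem hne hfin
  have hbdd : BddAbove {x : ℝ | ∃ f : Fin n → ℝ,
      f ≠ 0 ∧ (SimpleGraph.adjMatrix ℝ (Ln n)) *ᵥ f = x • f} := hfin.bddAbove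
  have hρ0 : 0 ≤ ρ := by
    by_contra hneg
    push_neg at hneg
    have hlt : ∀ i : Fin n, (herm (Ln n)).eigenvalues i < 0 := fun i =>
      lt_of_le_of_lt (hspec ▸ le_csSup hbdd (eig_mem (Ln n) i)) hneg
    have hsum : ∑ i : Fin n, (herm (Ln n)).eigenvalues i < 0 := by
      calc ∑ i : Fin n, (herm (Ln n)).eigenvalues i
          < ∑ _i : Fin n, (0:ℝ) :=
            Finset.sum_lt_sum_of_nonempty ⟨v0, Finset.mem_univ v0⟩ (fun i _ => hlt i)
        _ = 0 := by simp
    rw [sum_eig (Ln n)] at hsum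
    exact lt_irrefl _ hsum
  obtain ⟨f, hf0, hAf⟩ := hmem
  have hconst : ∀ u : Fin n, 3 ≤ u.val → f u = f v3 := fun u hu =>
    swap_eig hAf (by linarith) u v3 hu (by exact le_rfl)
  set a : ℝ := f v0 with ha
  set b : ℝ := f v1 with hb
  set c : ℝ := f v2 with hc
  set d : ℝ := f v3 with hd
  -- equation at v0
  have e0 : b = ρ * a := by
    have h := congrFun hAf v0
    have hpt : ∀ u ∈ Finset.univ,
        (Ln n).adjMatrix ℝ v0 u * f u = if u = v1 then f u else 0 := fun u _ => by
      by_cases hu : u = v1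
      · rw [if_pos hu]
        have hadj : (Ln n).Adj v0 u := (Ln_adj0 h0 u).mpr (by rw [hu])
        simp [SimpleGraph.adjMatrix_apply, hadj]
      · rw [if_neg hu, SimpleGraph.adjMatrix_apply, if_neg, zero_mul]
        intro hadj
        exact hu (Fin.ext ((Ln_adj0 h0 u).mp hadj))
    have hL : ((Ln n).adjMatrix ℝ *ᵥ f) v0 = b := by
      have hs : ((Ln n).adjMatrix ℝ *ᵥ f) v0 = ∑ u, (Ln n).adjMatrix ℝ v0 u * f u := rfl
      rw [hs, Finset.sum_congr rfl hpt, Finset.sum_ite_eq' Finset.univ v1 f]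
      simp
      rfl
    rw [hL] at h
    simpa using h
  -- equation at v1
  have e1 : a + c = ρ * b := by
    have h := congrFun hAf v1
    have hpt : ∀ u ∈ Finset.univ,
        (Ln n).adjMatrix ℝ v1 u * f u
          = (if u = v0 then f u else 0) + (if u = v2 then f u else 0) := fun u _ => by
      by_cases hu0 : u = v0
      · have hadj : (Ln n).Adj v1 u := (Ln_adj1 h1 u).mpr (Or.inl (by rw [hu0]))
        rw [if_pos hu0, if_neg (by rw [hu0]; exact fun hh => absurd (congrArg Fin.val hh) (by norm_num)), add_zero]
        simp [SimpleGraph.adjMatrix_apply, hadj]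
      by_cases hu2 : u = v2
      · have hadj : (Ln n).Adj v1 u := (Ln_adj1 h1 u).mpr (Or.inr (by rw [hu2]))
        rw [if_neg hu0, if_pos hu2, zero_add]
        simp [SimpleGraph.adjMatrix_apply, hadj]
      · rw [if_neg hu0, if_neg hu2, SimpleGraph.adjMatrix_apply, if_neg, zero_mul, add_zero]
        intro hadj
        rcases (Ln_adj1 h1 u).mp hadj with hh | hh
        · exact hu0 (Fin.ext hh)
        · exact hu2 (Fin.ext hh)
    have hL : ((Ln n).adjMatrix ℝ *ᵥ f) v1 = a + c := by
      have hs : ((Ln n).adjMatrix ℝ *ᵥ f) v1 = ∑ u, (Ln n).adjMatrix ℝ v1 u * f u := rfl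
      rw [hs, Finset.sum_congr rfl hpt, Finset.sum_add_distrib,
        Finset.sum_ite_eq' Finset.univ v0 f, Finset.sum_ite_eq' Finset.univ v2 f]
      simp
      rfl
    rw [hL] at h
    simpa using h
  -- equation at v2
  have e2 : b + ((n : ℝ) - 3) * d = ρ * c := by
    have h := congrFun hAf v2
    have hpt : ∀ u ∈ Finset.univ,
        (Ln n).adjMatrix ℝ v2 u * f u
          = (if u = v1 then f u else 0) + (if 3 ≤ u.val then f u else 0) := fun u _ => by
      by_cases hu1 : u = v1
      · have hadj : (Ln n).Adj v2 u := (Ln_adj2 h2 u).mpr (Or.inl (by rw [hu1]))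
        rw [if_pos hu1, if_neg (by rw [hu1]; exact (by norm_num : ¬ (3:ℕ) ≤ 1)), add_zero]
        simp [SimpleGraph.adjMatrix_apply, hadj]
      by_cases hu3 : 3 ≤ u.val
      · have hadj : (Ln n).Adj v2 u := (Ln_adj2 h2 u).mpr (Or.inr hu3)
        rw [if_neg hu1, if_pos hu3, zero_add]
        simp [SimpleGraph.adjMatrix_apply, hadj]
      · rw [if_neg hu1, if_neg hu3, SimpleGraph.adjMatrix_apply, if_neg, zero_mul, add_zero]
        intro hadj
        rcases (Ln_adj2 h2 u).mp hadj with hh | hh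
        · exact hu1 (Fin.ext hh)
        · exact hu3 hh
    have hL : ((Ln n).adjMatrix ℝ *ᵥ f) v2 = b + ((n - 3 : ℕ) : ℝ) * d := by
      have hs : ((Ln n).adjMatrix ℝ *ᵥ f) v2 = ∑ u, (Ln n).adjMatrix ℝ v2 u * f u := rfl
      rw [hs, Finset.sum_congr rfl hpt, Finset.sum_add_distrib,
        Finset.sum_ite_eq' Finset.univ v1 f, sum_ite_card d f 3 hconst]
      simp
      rfl
    rw [hL] at h
    rw [Nat.cast_sub (by omega : 3 ≤ n), Nat.cast_ofNat] at h
    simpa using h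
  -- equation at v3
  have e3 : c + ((n : ℝ) - 4) * d = ρ * d := by
    have h := congrFun hAf v3
    have hconst4 : ∀ u : Fin n, 4 ≤ u.val → f u = d := fun u hu => hconst u (by omega)
    have hpt : ∀ u ∈ Finset.univ,
        (Ln n).adjMatrix ℝ v3 u * f u
          = (if u = v2 then f u else 0) + (if 4 ≤ u.val then f u else 0) := fun u _ => by
      by_cases hu2 : u = v2
      · have hadj : (Ln n).Adj v3 u := (Ln_adj3 h3 u).mpr (Or.inl (by rw [hu2]))
        rw [if_pos hu2, if_neg (by rw [hu2]; exact (by norm_num : ¬ (4:ℕ) ≤ 2)), add_zero]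
        simp [SimpleGraph.adjMatrix_apply, hadj]
      by_cases hu4 : 4 ≤ u.val
      · have hadj : (Ln n).Adj v3 u := (Ln_adj3 h3 u).mpr (Or.inr hu4)
        rw [if_neg hu2, if_pos hu4, zero_add]
        simp [SimpleGraph.adjMatrix_apply, hadj]
      · rw [if_neg hu2, if_neg hu4, SimpleGraph.adjMatrix_apply, if_neg, zero_mul, add_zero]
        intro hadj
        rcases (Ln_adj3 h3 u).mp hadj with hh | hh
        · exact hu2 (Fin.ext hh)
        · exact hu4 hh
    have hL : ((Ln n).adjMatrix ℝ *ᵥ f) v3 = c + ((n - 4 : ℕ) : ℝ) * d := by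
      have hs : ((Ln n).adjMatrix ℝ *ᵥ f) v3 = ∑ u, (Ln n).adjMatrix ℝ v3 u * f u := rfl
      rw [hs, Finset.sum_congr rfl hpt, Finset.sum_add_distrib,
        Finset.sum_ite_eq' Finset.univ v2 f, sum_ite_card d f 4 hconst4]
      simp
      rfl
    rw [hL] at h
    rw [Nat.cast_sub (by omega : 4 ≤ n), Nat.cast_ofNat] at h
    simpa using h
  -- the 4×4 matrix
  set M : Matrix (Fin 4) (Fin 4) ℝ :=
    !![ρ, -1, 0, 0; -1, ρ, -1, 0; 0, -1, ρ, -((n:ℝ)-3); 0, 0, -1, ρ-((n:ℝ)-4)] with hM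
  set w : Fin 4 → ℝ := ![a, b, c, d] with hw
  have hw0 : w ≠ 0 := by
    obtain ⟨v, hv⟩ := Function.ne_iff.mp hf0
    intro hcontra
    have hza : a = 0 := by have := congrFun hcontra 0; simpa [hw] using this
    have hzb : b = 0 := by have := congrFun hcontra 1; simpa [hw] using this
    have hzc : c = 0 := by have := congrFun hcontra 2; simpa [hw] using this
    have hzd : d = 0 := by have := congrFun hcontra 3; simpa [hw] using this
    apply hv
    rcases Nat.lt_or_ge v.val 3 with hlt3 | hge3
    · have hcase : v.val = 0 ∨ v.val = 1 ∨ v.val = 2 := by omega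
      rcases hcase with hvv | hvv | hvv
      · rw [show v = v0 from Fin.ext hvv]; exact hza
      · rw [show v = v1 from Fin.ext hvv]; exact hzb
      · rw [show v = v2 from Fin.ext hvv]; exact hzc
    · rw [hconst v hge3]; exact hzd
  have hMw : M *ᵥ w = 0 := by
    funext k
    fin_cases k <;>
      simp [hM, hw, Matrix.mulVec, dotProduct, Fin.sum_univ_four] <;>
      linarith [e0, e1, e2, e3]
  have hdet : M.det = 0 := Matrix.exists_mulVec_eq_zero_iff.mp ⟨w, hw0, hMw⟩
  have hexp : M.det = ρ ^ 4 - ((n : ℝ) - 4) * ρ ^ 3 - ((n : ℝ) - 1) * ρ ^ 2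
      + (2 * (n : ℝ) - 8) * ρ + ((n : ℝ) - 3) := by
    rw [hM]
    simp [Matrix.det_succ_row_zero, Fin.sum_univ_succ, Fin.succAbove,
      Matrix.cons_val_succ, Matrix.cons_val_zero, Matrix.cons_val_one, Matrix.head_cons]
    ring
  rw [← hexp, hdet]
end

section
/- The spectral radius ρ of the graph B_n satisfies ρ^4 − (n−5)ρ^3 − (n−1)ρ^2 + (3n−16)ρ + (2n−8) = 0. -/
open Matrix Finset

open Finset in
private def F (a b c d : ℝ) : ℕ → ℝ := fun k =>
  if k = 0 then a else if k = 1 then b else if k = 2 then a else if k ≤ 4 then c else d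

private lemma sum_split {n : ℕ} (hn : 6 ≤ n) (W : ℕ → ℝ) :
    ∑ i ∈ range n, W i = (W 0 + W 1 + W 2 + W 3 + W 4) + ∑ i ∈ Ico 5 n, W i := by
  rw [range_eq_Ico, ← Finset.sum_Ico_consecutive W (by omega : 0 ≤ 5) (by omega : 5 ≤ n)]
  congr 1
  rw [show Ico 0 5 = range 5 from by rw [range_eq_Ico]]
  simp [Finset.sum_range_succ]
  try ring


private lemma fin_sum_eq {n : ℕ} (g : Fin n → ℝ) (W : ℕ → ℝ) (h : ∀ u : Fin n, g u = W u.val) :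
    ∑ u : Fin n, g u = ∑ i ∈ Finset.range n, W i := by
  rw [← Fin.sum_univ_eq_sum_range W n]; exact Finset.sum_congr rfl (fun u _ => h u)

section rows
variable {n : ℕ} (a b c d : ℝ) [DecidableRel (Bn n).Adj]

private lemma row0 (hn : 6 ≤ n) (v : Fin n) (hv : v.val = 0) :
    ∑ u : Fin n, (if (Bn n).Adj v u then F a b c d u.val else 0) = b + c := by
  have hpt : ∀ u : Fin n, (if (Bn n).Adj v u then F a b c d u.val else 0)
      = (fun k => if k = 1 then b else if k = 3 then c else 0) u.val := by
    intro u
    simp only [Bn, SimpleGraph.fromRel_adj, ne_eq, Fin.ext_iff, hv, F]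
    split_ifs <;> first | rfl | (exfalso; simp_all <;> omega)
  rw [fin_sum_eq _ (fun k => if k = 1 then b else if k = 3 then c else 0) hpt, sum_split hn]
  rw [Finset.sum_eq_zero (fun i hi => by
    simp only [mem_Ico] at hi; rw [if_neg (by omega), if_neg (by omega)])]
  norm_num

private lemma row1 (hn : 6 ≤ n) (v : Fin n) (hv : v.val = 1) :
    ∑ u : Fin n, (if (Bn n).Adj v u then F a b c d u.val else 0) = a + a := by
  have hpt : ∀ u : Fin n, (if (Bn n).Adj v u then F a b c d u.val else 0)
      = (fun k => if k = 0 then a else if k = 2 then a else 0) u.val := by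
    intro u
    simp only [Bn, SimpleGraph.fromRel_adj, ne_eq, Fin.ext_iff, hv, F]
    split_ifs <;> first | rfl | (exfalso; simp_all <;> omega)
  rw [fin_sum_eq _ (fun k => if k = 0 then a else if k = 2 then a else 0) hpt, sum_split hn]
  rw [Finset.sum_eq_zero (fun i hi => by
    simp only [mem_Ico] at hi; rw [if_neg (by omega), if_neg (by omega)])]
  norm_num

private lemma row2 (hn : 6 ≤ n) (v : Fin n) (hv : v.val = 2) :
    ∑ u : Fin n, (if (Bn n).Adj v u then F a b c d u.val else 0) = b + c := by
  have hpt : ∀ u : Fin n, (if (Bn n).Adj v u then F a b c d u.val else 0)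
      = (fun k => if k = 1 then b else if k = 4 then c else 0) u.val := by
    intro u
    simp only [Bn, SimpleGraph.fromRel_adj, ne_eq, Fin.ext_iff, hv, F]
    split_ifs <;> first | rfl | (exfalso; simp_all <;> omega)
  rw [fin_sum_eq _ (fun k => if k = 1 then b else if k = 4 then c else 0) hpt, sum_split hn]
  rw [Finset.sum_eq_zero (fun i hi => by
    simp only [mem_Ico] at hi; rw [if_neg (by omega), if_neg (by omega)])]
  norm_num

private lemma tail_const {n : ℕ} (hn : 6 ≤ n) (d : ℝ) :
    ∑ _i ∈ Ico 5 n, d = ((n : ℝ) - 5) * d := by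
  rw [Finset.sum_const, Nat.card_Ico, nsmul_eq_mul]
  have : ((n - 5 : ℕ) : ℝ) = (n : ℝ) - 5 := by
    push_cast [Nat.cast_sub (by omega : 5 ≤ n)]; ring
  rw [this]

private lemma row3 (hn : 6 ≤ n) (v : Fin n) (hv : v.val = 3) :
    ∑ u : Fin n, (if (Bn n).Adj v u then F a b c d u.val else 0)
      = a + c + ((n : ℝ) - 5) * d := by
  have hpt : ∀ u : Fin n, (if (Bn n).Adj v u then F a b c d u.val else 0)
      = (fun k => if k = 0 then a else if k = 4 then c else if 5 ≤ k then d else 0) u.val := by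
    intro u
    simp only [Bn, SimpleGraph.fromRel_adj, ne_eq, Fin.ext_iff, hv, F]
    split_ifs <;> first | rfl | (exfalso; simp_all <;> omega)
  rw [fin_sum_eq _ (fun k => if k = 0 then a else if k = 4 then c else if 5 ≤ k then d else 0) hpt, sum_split hn]
  have ht : ∀ i ∈ Ico 5 n, (fun k => if k = 0 then a else if k = 4 then c else if 5 ≤ k then d else 0) i = d := fun i hi => by
    simp only [mem_Ico] at hi
    simp only []
    rw [if_neg (by omega), if_neg (by omega), if_pos (by omega)]
  rw [Finset.sum_congr rfl ht, Finset.sum_const, Nat.card_Ico, nsmul_eq_mul]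
  have hcast : ((n - 5 : ℕ) : ℝ) = (n : ℝ) - 5 := by
    push_cast [Nat.cast_sub (by omega : 5 ≤ n)]; ring
  rw [hcast]
  norm_num

private lemma row4 (hn : 6 ≤ n) (v : Fin n) (hv : v.val = 4) :
    ∑ u : Fin n, (if (Bn n).Adj v u then F a b c d u.val else 0)
      = a + c + ((n : ℝ) - 5) * d := by
  have hpt : ∀ u : Fin n, (if (Bn n).Adj v u then F a b c d u.val else 0)
      = (fun k => if k = 2 then a else if k = 3 then c else if 5 ≤ k then d else 0) u.val := by
    intro u
    simp only [Bn, SimpleGraph.fromRel_adj, ne_eq, Fin.ext_iff, hv, F]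
    split_ifs <;> first | rfl | (exfalso; simp_all <;> omega)
  rw [fin_sum_eq _ (fun k => if k = 2 then a else if k = 3 then c else if 5 ≤ k then d else 0) hpt, sum_split hn]
  have ht : ∀ i ∈ Ico 5 n, (fun k => if k = 2 then a else if k = 3 then c else if 5 ≤ k then d else 0) i = d := fun i hi => by
    simp only [mem_Ico] at hi
    simp only []
    rw [if_neg (by omega), if_neg (by omega), if_pos (by omega)]
  rw [Finset.sum_congr rfl ht, Finset.sum_const, Nat.card_Ico, nsmul_eq_mul]
  have hcast : ((n - 5 : ℕ) : ℝ) = (n : ℝ) - 5 := by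
    push_cast [Nat.cast_sub (by omega : 5 ≤ n)]; ring
  rw [hcast]
  norm_num

private lemma row5 (hn : 6 ≤ n) (v : Fin n) (hv : 5 ≤ v.val) :
    ∑ u : Fin n, (if (Bn n).Adj v u then F a b c d u.val else 0)
      = c + c + (((n : ℝ) - 5) * d - d) := by
  have hpt : ∀ u : Fin n, (if (Bn n).Adj v u then F a b c d u.val else 0)
      = (fun k => if k = 3 then c else if k = 4 then c else
          if 5 ≤ k then (if k = v.val then 0 else d) else 0) u.val := by
    intro u
    simp only [Bn, SimpleGraph.fromRel_adj, ne_eq, Fin.ext_iff, F]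
    split_ifs <;> first | rfl | (exfalso; simp_all <;> omega)
  rw [fin_sum_eq _ (fun k => if k = 3 then c else if k = 4 then c else
            if 5 ≤ k then (if k = v.val then 0 else d) else 0) hpt, sum_split hn]
  have htail : ∑ i ∈ Ico 5 n,
      (fun k => if k = 3 then c else if k = 4 then c else
        if 5 ≤ k then (if k = v.val then 0 else d) else 0) i
      = ((n : ℝ) - 5) * d - d := by
    have ht : ∀ i ∈ Ico 5 n, (fun k => if k = 3 then c else if k = 4 then c else
        if 5 ≤ k then (if k = v.val then 0 else d) else 0) i
        = d - (if i = v.val then d else 0) := fun i hi => by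
      simp only [mem_Ico] at hi
      simp only []
      rw [if_neg (by omega), if_neg (by omega), if_pos (by omega)]
      split_ifs <;> ring
    rw [Finset.sum_congr rfl ht, Finset.sum_sub_distrib, Finset.sum_const, Nat.card_Ico,
      nsmul_eq_mul, Finset.sum_ite_eq' (Ico 5 n) v.val (fun _ => d),
      if_pos (by simp only [mem_Ico]; exact ⟨hv, v.isLt⟩)]
    have hcast : ((n - 5 : ℕ) : ℝ) = (n : ℝ) - 5 := by
      push_cast [Nat.cast_sub (by omega : 5 ≤ n)]; ring
    rw [hcast]
  rw [htail]
  norm_num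

end rows

private lemma mulVec_indicator {n : ℕ} [DecidableRel (Bn n).Adj] (g : Fin n → ℝ) (v : Fin n) :
    ((Bn n).adjMatrix ℝ *ᵥ g) v = ∑ u : Fin n, (if (Bn n).Adj v u then g u else 0) := by
  simp [Matrix.mulVec, dotProduct, SimpleGraph.adjMatrix_apply, ite_mul]

private lemma csSup_eq_of {S : Set ℝ} {L : ℝ} (h1 : L ∈ S) (h2 : ∀ x ∈ S, x ≤ L) : sSup S = L :=
  le_antisymm (csSup_le ⟨L, h1⟩ h2) (le_csSup ⟨L, h2⟩ h1)



private def quartP (n : ℕ) (x : ℝ) : ℝ :=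
  x ^ 4 - ((n : ℝ) - 5) * x ^ 3 - ((n : ℝ) - 1) * x ^ 2 + (3 * (n : ℝ) - 16) * x + (2 * (n : ℝ) - 8)

private lemma quart_root_exists (n : ℕ) (hn : 6 ≤ n) :
    ∃ L : ℝ, (n : ℝ) - 4 < L ∧ quartP n L = 0 := by
  have hn' : (6 : ℝ) ≤ (n : ℝ) := by exact_mod_cast hn
  have hcont : ContinuousOn (quartP n) (Set.Icc ((n:ℝ) - 4) ((n:ℝ) - 3)) := by
    unfold quartP; fun_prop
  have hle : (n:ℝ) - 4 ≤ (n:ℝ) - 3 := by linarith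
  have hA : quartP n ((n:ℝ)-4) = -2*(n:ℝ) + 8 := by unfold quartP; ring
  have hB : quartP n ((n:ℝ)-3) = (n:ℝ)^3 - 8*(n:ℝ)^2 + 16*(n:ℝ) - 5 := by unfold quartP; ring
  have hAneg : quartP n ((n:ℝ)-4) < 0 := by rw [hA]; linarith
  have hBpos : 0 < quartP n ((n:ℝ)-3) := by
    rw [hB]; nlinarith [sq_nonneg ((n:ℝ)-6), sq_nonneg ((n:ℝ)-5)]
  obtain ⟨L, hL, hL0⟩ := intermediate_value_Icc hle hcont ⟨hAneg.le, hBpos.le⟩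
  refine ⟨L, ?_, hL0⟩
  rcases lt_or_eq_of_le hL.1 with h | h
  · exact h
  · exfalso; rw [← h] at hL0; rw [hL0] at hAneg; exact lt_irrefl _ hAneg

private lemma specRad_Bn_eq (n : ℕ) (hn : 6 ≤ n) {L : ℝ} (hL4 : (n : ℝ) - 4 < L)
    (hLroot : quartP n L = 0) : specRad (Bn n) = L := by
  unfold quartP at hLroot
  have hn' : (6 : ℝ) ≤ (n : ℝ) := by exact_mod_cast hn
  have hLpos : (2:ℝ) ≤ L := by linarith
  have hc : (0:ℝ) < L ^ 2 - 2 := by nlinarith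
  have hden : (0:ℝ) < L - (n:ℝ) + 6 := by linarith
  set a : ℝ := L with ha
  set b : ℝ := 2 with hb
  set c : ℝ := L ^ 2 - 2 with hcdef
  set d : ℝ := 2 * (L ^ 2 - 2) / (L - (n:ℝ) + 6) with hd
  have hdpos : 0 < d := div_pos (by nlinarith) hden
  classical
  set f : Fin n → ℝ := fun v => F a b c d v.val with hf
  have hfpos : ∀ v : Fin n, 0 < f v := by
    intro v
    simp only [hf, F]
    split_ifs
    · linarith
    · norm_num
    · linarith
    · exact hc
    · exact hdpos
  have hsum : ∀ v : Fin n, ∑ u : Fin n, (if (Bn n).Adj v u then f u else 0) = L * f v := by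
    intro v
    have hcase : v.val = 0 ∨ v.val = 1 ∨ v.val = 2 ∨ v.val = 3 ∨ v.val = 4 ∨ 5 ≤ v.val := by omega
    rcases hcase with hv | hv | hv | hv | hv | hv
    · rw [show (fun u : Fin n => if (Bn n).Adj v u then f u else 0)
          = (fun u => if (Bn n).Adj v u then F a b c d u.val else 0) from rfl] at *
      rw [row0 a b c d hn v hv, hf]
      simp only [F, hv]
      norm_num [hb, hcdef]; ring
    · rw [row1 a b c d hn v hv, hf]
      simp only [F, hv]
      norm_num [ha, hb]; ring
    · rw [row2 a b c d hn v hv, hf]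
      simp only [F, hv]
      norm_num [hb, hcdef]; ring
    · rw [row3 a b c d hn v hv, hf]
      simp only [F, hv]
      norm_num
      rw [ha, hcdef, hd]
      field_simp [show L - (n:ℝ) + 6 ≠ 0 by linarith]
      ring_nf
      linear_combination (-1 : ℝ) * hLroot
    · rw [row4 a b c d hn v hv, hf]
      simp only [F, hv]
      norm_num
      rw [ha, hcdef, hd]
      field_simp [show L - (n:ℝ) + 6 ≠ 0 by linarith]
      ring_nf
      linear_combination (-1 : ℝ) * hLroot
    · rw [row5 a b c d hn v hv, hf]
      simp only [F]
      rw [if_neg (by omega), if_neg (by omega), if_neg (by omega), if_neg (by omega)]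
      rw [hcdef, hd]
      field_simp [show L - (n:ℝ) + 6 ≠ 0 by linarith]
      ring
  have hf0 : f ≠ 0 := by
    intro h
    have h0 := congrFun h ⟨0, by omega⟩
    simp only [hf, F, Pi.zero_apply] at h0
    norm_num at h0
    linarith [h0]
  unfold specRad
  apply csSup_eq_of
  · refine ⟨f, hf0, ?_⟩
    funext v
    rw [mulVec_indicator, hsum v]
    simp [smul_eq_mul, ha]
  · rintro x ⟨g, hg0, hgeq⟩
    have hrow : ∀ v : Fin n, ∑ u : Fin n, (if (Bn n).Adj v u then g u else 0) = x * g v := by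
      intro v
      have := congrFun hgeq v
      rw [mulVec_indicator] at this
      simpa [smul_eq_mul] using this
    have hstep : ∀ v : Fin n, |x| * |g v| ≤ ∑ u : Fin n, (if (Bn n).Adj v u then |g u| else 0) := by
      intro v
      calc |x| * |g v| = |x * g v| := (abs_mul x (g v)).symm
        _ = |∑ u : Fin n, (if (Bn n).Adj v u then g u else 0)| := by rw [hrow v]
        _ ≤ ∑ u : Fin n, |if (Bn n).Adj v u then g u else 0| := Finset.abs_sum_le_sum_abs _ _
        _ = ∑ u : Fin n, (if (Bn n).Adj v u then |g u| else 0) := by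
            refine Finset.sum_congr rfl fun u _ => ?_
            split_ifs <;> simp
    have hT : 0 < ∑ v : Fin n, f v * |g v| := by
      obtain ⟨v0, hv0⟩ := Function.ne_iff.mp hg0
      exact Finset.sum_pos' (fun v _ => mul_nonneg (hfpos v).le (abs_nonneg _))
        ⟨v0, Finset.mem_univ _, mul_pos (hfpos v0) (abs_pos.mpr hv0)⟩
    have hswap : ∑ v : Fin n, f v * (∑ u : Fin n, if (Bn n).Adj v u then |g u| else 0)
        = ∑ u : Fin n, (∑ v : Fin n, if (Bn n).Adj u v then f v else 0) * |g u| := by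
      calc ∑ v : Fin n, f v * (∑ u : Fin n, if (Bn n).Adj v u then |g u| else 0)
          = ∑ v : Fin n, ∑ u : Fin n, (if (Bn n).Adj v u then f v * |g u| else 0) := by
            refine Finset.sum_congr rfl fun v _ => ?_
            rw [Finset.mul_sum]
            refine Finset.sum_congr rfl fun u _ => ?_
            split_ifs <;> simp
        _ = ∑ u : Fin n, ∑ v : Fin n, (if (Bn n).Adj v u then f v * |g u| else 0) :=
            Finset.sum_comm
        _ = ∑ u : Fin n, (∑ v : Fin n, if (Bn n).Adj u v then f v else 0) * |g u| := by
            refine Finset.sum_congr rfl fun u _ => ?_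
            rw [Finset.sum_mul]
            refine Finset.sum_congr rfl fun v _ => ?_
            by_cases hA : (Bn n).Adj v u
            · rw [if_pos hA, if_pos hA.symm]
            · rw [if_neg hA, if_neg (fun h => hA h.symm), zero_mul]
    have hmain : |x| * ∑ v : Fin n, f v * |g v| ≤ L * ∑ v : Fin n, f v * |g v| := by
      calc |x| * ∑ v : Fin n, f v * |g v|
          = ∑ v : Fin n, f v * (|x| * |g v|) := by
            rw [Finset.mul_sum]; refine Finset.sum_congr rfl fun v _ => ?_; ring
        _ ≤ ∑ v : Fin n, f v * (∑ u : Fin n, if (Bn n).Adj v u then |g u| else 0) :=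
            Finset.sum_le_sum fun v _ => mul_le_mul_of_nonneg_left (hstep v) (hfpos v).le
        _ = ∑ u : Fin n, (∑ v : Fin n, if (Bn n).Adj u v then f v else 0) * |g u| := hswap
        _ = ∑ u : Fin n, (L * f u) * |g u| := by
            refine Finset.sum_congr rfl fun u _ => ?_; rw [hsum u]
        _ = L * ∑ v : Fin n, f v * |g v| := by
            rw [Finset.mul_sum]; refine Finset.sum_congr rfl fun v _ => ?_; ring
    exact le_trans (le_abs_self x) (le_of_mul_le_mul_right hmain hT)


theorem specRad_Bn_quartic (n : ℕ) (hn : 6 ≤ n) :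
    (specRad (Bn n)) ^ 4 - ((n : ℝ) - 5) * (specRad (Bn n)) ^ 3
      - ((n : ℝ) - 1) * (specRad (Bn n)) ^ 2
      + (3 * (n : ℝ) - 16) * specRad (Bn n) + (2 * (n : ℝ) - 8) = 0 := by
  obtain ⟨L, hL4, hLroot⟩ := quart_root_exists n hn
  rw [specRad_Bn_eq n hn hL4 hLroot]
  unfold quartP at hLroot
  exact hLroot
end

section
/- For n ≥ 7, the spectral radius of L_n satisfies n − 3 < ρ(L_n) < n − 3 + 1/(n−3). -/
open Matrix

open Finset

/-- Adjacency of `Ln` in terms of values. -/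
def lnC (x y : ℕ) : Prop :=
  x ≠ y ∧ ((2 ≤ x ∧ 2 ≤ y) ∨ (x = 0 ∧ y = 1) ∨ (x = 1 ∧ y = 2) ∨
    (y = 0 ∧ x = 1) ∨ (y = 1 ∧ x = 2))

instance (x y : ℕ) : Decidable (lnC x y) := by unfold lnC; infer_instance

lemma ln_adj_iff {n : ℕ} (a b : Fin n) : (Ln n).Adj a b ↔ lnC a.val b.val := by
  have hab : a ≠ b ↔ a.val ≠ b.val :=
    ⟨fun h h' => h (Fin.ext h'), fun h h' => h (congrArg Fin.val h')⟩
  simp only [Ln, SimpleGraph.fromRel_adj, lnC, hab]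
  tauto

lemma adjMatrix_ln_apply {n : ℕ} [DecidableRel (Ln n).Adj] (a b : Fin n) :
    (Ln n).adjMatrix ℝ a b = if lnC a.val b.val then 1 else 0 := by
  rw [SimpleGraph.adjMatrix_apply]
  exact if_congr (ln_adj_iff a b) rfl rfl

lemma sum_range_split {n : ℕ} (hn : 3 ≤ n) (g : ℕ → ℝ) :
    ∑ i ∈ range n, g i = g 0 + g 1 + g 2 + ∑ i ∈ Ico 3 n, g i := by
  rw [range_eq_Ico, ← Finset.sum_Ico_consecutive g (Nat.zero_le 3) hn,
    show Ico 0 3 = range 3 from (Finset.range_eq_Ico 3).symm]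
  simp [Finset.sum_range_succ]
lemma sum_Ico_const' {a n : ℕ} (c : ℝ) (g : ℕ → ℝ) (h : ∀ i, a ≤ i → i < n → g i = c) :
    ∑ i ∈ Ico a n, g i = (n - a : ℕ) * c := by
  rw [Finset.sum_congr rfl fun i hi => h i (mem_Ico.mp hi).1 (mem_Ico.mp hi).2,
    Finset.sum_const, Nat.card_Ico, nsmul_eq_mul]

lemma ln_sum_eval {n : ℕ} (hn : 7 ≤ n) [DecidableRel (Ln n).Adj] (v : Fin n) (F : ℕ → ℝ) :
    ∑ u : Fin n, (Ln n).adjMatrix ℝ v u * F u.val =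
      if v.val = 0 then F 1
      else if v.val = 1 then F 0 + F 2
      else if v.val = 2 then F 1 + ∑ i ∈ Ico 3 n, F i
      else F 2 + ((∑ i ∈ Ico 3 n, F i) - F v.val) := by
  have h1 : ∑ u : Fin n, (Ln n).adjMatrix ℝ v u * F u.val
      = ∑ i ∈ range n, (if lnC v.val i then F i else 0) := by
    rw [← Fin.sum_univ_eq_sum_range (fun i => if lnC v.val i then F i else 0) n]
    exact Finset.sum_congr rfl fun u _ => by
      rw [adjMatrix_ln_apply, ite_mul, one_mul, zero_mul]
  rw [h1, sum_range_split (by omega)]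
  have hv := v.isLt
  by_cases h0 : v.val = 0
  · rw [h0]
    rw [sum_Ico_const' 0 _ (fun i h3 hin => by
      have : ¬ lnC 0 i := by simp only [lnC]; omega
      rw [if_neg this])]
    norm_num [lnC]
  by_cases h1' : v.val = 1
  · rw [h1']
    rw [sum_Ico_const' 0 _ (fun i h3 hin => by
      have : ¬ lnC 1 i := by simp only [lnC]; omega
      rw [if_neg this])]
    norm_num [lnC]
  by_cases h2 : v.val = 2
  · rw [h2]
    have hsum : (∑ i ∈ Ico 3 n, (if lnC 2 i then F i else 0)) = ∑ i ∈ Ico 3 n, F i :=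
      Finset.sum_congr rfl (fun i hi => by
        have h3 := (mem_Ico.mp hi).1
        have : lnC 2 i := by simp only [lnC]; omega
        rw [if_pos this])
    rw [hsum]
    norm_num [lnC]
  · have h3 : 3 ≤ v.val := by omega
    have c0 : ¬ lnC v.val 0 := by simp only [lnC]; omega
    have c1 : ¬ lnC v.val 1 := by simp only [lnC]; omega
    have c2 : lnC v.val 2 := by simp only [lnC]; omega
    have hsplit : ∀ i ∈ Ico 3 n, (if lnC v.val i then F i else 0)
        = F i - (if i = v.val then F i else 0) := by
      intro i hi
      rcases mem_Ico.mp hi with ⟨hi3, hin⟩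
      by_cases hiv : i = v.val
      · have : ¬ lnC v.val i := by simp only [lnC]; omega
        rw [if_pos hiv, if_neg this, hiv]; ring
      · have : lnC v.val i := by simp only [lnC]; omega
        rw [if_neg hiv, if_pos this]; ring
    rw [if_neg h0, if_neg h1', if_neg h2, if_neg c0, if_neg c1, if_pos c2,
      Finset.sum_congr rfl hsplit, Finset.sum_sub_distrib,
      Finset.sum_ite_eq' (Ico 3 n) v.val F, if_pos (mem_Ico.mpr ⟨h3, hv⟩)]
    ring

/-- Degrees of `Ln`. -/
noncomputable def lnD (n : ℕ) (i : ℕ) : ℝ :=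
  if i = 0 then 1 else if i = 1 then 2 else if i = 2 then (n:ℝ)-2 else (n:ℝ)-3

lemma cast_sub3 {n : ℕ} (hn : 7 ≤ n) : ((n - 3 : ℕ) : ℝ) = (n:ℝ) - 3 := by
  have : (3:ℕ) ≤ n := by omega
  push_cast [this]; ring

lemma ln_deg {n : ℕ} (hn : 7 ≤ n) [DecidableRel (Ln n).Adj] (v : Fin n) :
    ∑ u : Fin n, (Ln n).adjMatrix ℝ v u = lnD n v.val := by
  have h := ln_sum_eval hn v (fun _ => 1)
  simp only [mul_one] at h
  rw [h]
  have hico : ∑ i ∈ Ico 3 n, (1:ℝ) = (n:ℝ) - 3 := by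
    rw [sum_Ico_const' 1 _ (fun _ _ _ => rfl), cast_sub3 hn, mul_one]
  rw [hico]
  unfold lnD
  split_ifs <;> ring

lemma ln_sum_lnD_Ico {n : ℕ} (hn : 7 ≤ n) :
    ∑ i ∈ Ico 3 n, lnD n i = ((n:ℝ) - 3) * ((n:ℝ) - 3) := by
  rw [sum_Ico_const' ((n:ℝ)-3) _ (fun i h3 hin => by
      unfold lnD
      rw [if_neg (by omega), if_neg (by omega), if_neg (by omega)]),
    cast_sub3 hn]

lemma ln_S_le {n : ℕ} (hn : 7 ≤ n) [DecidableRel (Ln n).Adj] (v : Fin n) :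
    ∑ u : Fin n, (Ln n).adjMatrix ℝ v u * lnD n u.val ≤ (n:ℝ)^2 - 6*n + 11 := by
  have hn' : (7:ℝ) ≤ (n:ℝ) := by exact_mod_cast hn
  rw [ln_sum_eval hn v (lnD n), ln_sum_lnD_Ico hn]
  have hd0 : lnD n 0 = 1 := by norm_num [lnD]
  have hd1 : lnD n 1 = 2 := by norm_num [lnD]
  have hd2 : lnD n 2 = (n:ℝ) - 2 := by norm_num [lnD]
  split_ifs with h0 h1 h2
  · rw [hd1]; nlinarith
  · rw [hd0, hd2]; nlinarith
  · rw [hd1]; nlinarith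
  · have hdv : lnD n v.val = (n:ℝ) - 3 := by
      unfold lnD; rw [if_neg h0, if_neg h1, if_neg h2]
    rw [hd2, hdv]; nlinarith

lemma ln_eig_sq {n : ℕ} (hn : 7 ≤ n) [DecidableRel (Ln n).Adj] {x : ℝ} {f : Fin n → ℝ}
    (hf : f ≠ 0) (h : (Ln n).adjMatrix ℝ *ᵥ f = x • f) :
    x ^ 2 ≤ (n:ℝ)^2 - 6*n + 11 := by
  set A := (Ln n).adjMatrix ℝ with hA
  have hA0 : ∀ a b, 0 ≤ A a b := fun a b => by
    rw [hA, SimpleGraph.adjMatrix_apply]; split <;> norm_num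
  obtain ⟨v, -, hv⟩ := Finset.exists_max_image Finset.univ (fun u => |f u|)
    ⟨⟨0, by omega⟩, Finset.mem_univ _⟩
  have hfv : 0 < |f v| := by
    rcases Function.ne_iff.mp hf with ⟨u, hu⟩
    exact lt_of_lt_of_le (abs_pos.mpr hu) (hv u (Finset.mem_univ u))
  have h2 : A *ᵥ (A *ᵥ f) = x ^ 2 • f := by
    rw [h, mulVec_smul, h, smul_smul, sq]
  have hxv : x ^ 2 * f v = ∑ u : Fin n, A v u * ∑ w : Fin n, A u w * f w := by
    have hcv := congrFun h2 v
    simp only [Pi.smul_apply, smul_eq_mul] at hcv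
    rw [← hcv]
    simp [mulVec, dotProduct]
  have key : x ^ 2 * |f v| ≤ (∑ u : Fin n, A v u * lnD n u.val) * |f v| := by
    calc x^2 * |f v| = |x ^ 2 * f v| := by
          rw [abs_mul, abs_of_nonneg (sq_nonneg x)]
      _ ≤ ∑ u : Fin n, |A v u * ∑ w : Fin n, A u w * f w| := by
          rw [hxv]; exact Finset.abs_sum_le_sum_abs _ _
      _ ≤ ∑ u : Fin n, A v u * (∑ w : Fin n, A u w * |f v|) := by
          refine Finset.sum_le_sum fun u _ => ?_
          rw [abs_mul, abs_of_nonneg (hA0 v u)]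
          refine mul_le_mul_of_nonneg_left ?_ (hA0 v u)
          calc |∑ w : Fin n, A u w * f w| ≤ ∑ w : Fin n, |A u w * f w| :=
                Finset.abs_sum_le_sum_abs _ _
            _ ≤ ∑ w : Fin n, A u w * |f v| := Finset.sum_le_sum fun w _ => by
                rw [abs_mul, abs_of_nonneg (hA0 u w)]
                exact mul_le_mul_of_nonneg_left (hv w (Finset.mem_univ w)) (hA0 u w)
      _ = (∑ u : Fin n, A v u * lnD n u.val) * |f v| := by
          rw [Finset.sum_mul]
          refine Finset.sum_congr rfl fun u _ => ?_
          rw [← Finset.sum_mul, ln_deg hn u]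
          ring
  have hx2 : x ^ 2 ≤ ∑ u : Fin n, A v u * lnD n u.val :=
    le_of_mul_le_mul_right key hfv
  exact hx2.trans (ln_S_le hn v)

lemma quad_form_le {m : Type*} [Fintype m] [DecidableEq m] {A : Matrix m m ℝ}
    (hA : A.IsHermitian) {c : ℝ} (hc : ∀ i, hA.eigenvalues i ≤ c) (f : m → ℝ) :
    f ⬝ᵥ (A *ᵥ f) ≤ c * (f ⬝ᵥ f) := by
  set U : Matrix m m ℝ := (Matrix.IsHermitian.eigenvectorUnitary hA : Matrix m m ℝ) with hU
  have hU1 : U * star U = 1 :=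
    (Matrix.mem_unitaryGroup_iff).mp (Matrix.IsHermitian.eigenvectorUnitary hA).2
  set g : m → ℝ := star U *ᵥ f with hg
  have hfU : ∀ w : m → ℝ, f ⬝ᵥ (U *ᵥ w) = g ⬝ᵥ w := by
    intro w
    rw [dotProduct_mulVec]
    congr 1
    rw [hg, Matrix.star_eq_conjTranspose, conjTranspose_eq_transpose_of_trivial,
      mulVec_transpose]
  have hDf : A *ᵥ f = U *ᵥ (Matrix.diagonal hA.eigenvalues *ᵥ g) := by
    conv_lhs => rw [Matrix.IsHermitian.spectral_theorem hA]
    rw [RCLike.ofReal_real_eq_id]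
    simp only [Unitary.conjStarAlgAut_apply, Function.comp_def, id_eq, ← mulVec_mulVec, hg]; rfl
  have e1 : f ⬝ᵥ (A *ᵥ f) = ∑ i, hA.eigenvalues i * g i ^ 2 := by
    rw [hDf, hfU]
    simp only [dotProduct, mulVec_diagonal]
    exact Finset.sum_congr rfl fun i _ => by ring
  have e2 : f ⬝ᵥ f = ∑ i, g i ^ 2 := by
    have hfg : f = U *ᵥ g := by
      rw [hg, mulVec_mulVec, hU1, one_mulVec]
    nth_rewrite 2 [hfg]
    rw [hfU]
    exact Finset.sum_congr rfl fun i _ => by ring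
  rw [e1, e2, Finset.mul_sum]
  exact Finset.sum_le_sum fun i _ => mul_le_mul_of_nonneg_right (hc i) (sq_nonneg _)

/-- The Rayleigh test vector. -/
noncomputable def lnF (n : ℕ) (i : ℕ) : ℝ :=
  if i = 0 then 0 else if i = 1 then ((n:ℝ)-3)⁻¹ else 1

noncomputable def lnG (n : ℕ) (i : ℕ) : ℝ :=
  if i = 0 then ((n:ℝ)-3)⁻¹ else if i = 1 then 1
  else if i = 2 then ((n:ℝ)-3)⁻¹ + ((n:ℝ)-3) else (n:ℝ)-3

lemma ln_sum_lnF_Ico {n : ℕ} (hn : 7 ≤ n) :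
    ∑ i ∈ Ico 3 n, lnF n i = (n:ℝ) - 3 := by
  rw [sum_Ico_const' 1 _ (fun i h3 hin => by
      unfold lnF; rw [if_neg (by omega), if_neg (by omega)]),
    cast_sub3 hn, mul_one]

lemma ln_mulVec_lnF {n : ℕ} (hn : 7 ≤ n) [DecidableRel (Ln n).Adj] (v : Fin n) :
    ((Ln n).adjMatrix ℝ *ᵥ (fun u : Fin n => lnF n u.val)) v = lnG n v.val := by
  have hmv : ((Ln n).adjMatrix ℝ *ᵥ (fun u : Fin n => lnF n u.val)) v
      = ∑ u : Fin n, (Ln n).adjMatrix ℝ v u * lnF n u.val := by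
    simp [mulVec, dotProduct]
  rw [hmv, ln_sum_eval hn v (lnF n), ln_sum_lnF_Ico hn]
  have hF0 : lnF n 0 = 0 := by norm_num [lnF]
  have hF1 : lnF n 1 = ((n:ℝ)-3)⁻¹ := by norm_num [lnF]
  have hF2 : lnF n 2 = 1 := by norm_num [lnF]
  unfold lnG
  split_ifs with h0 h1 h2
  · rw [hF1]
  · rw [hF0, hF2]; ring
  · rw [hF1]
  · have hFv : lnF n v.val = 1 := by
      unfold lnF; rw [if_neg h0, if_neg h1]
    rw [hF2, hFv]; ring

lemma ln_Q1 {n : ℕ} (hn : 7 ≤ n) [DecidableRel (Ln n).Adj] :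
    (fun u : Fin n => lnF n u.val) ⬝ᵥ ((Ln n).adjMatrix ℝ *ᵥ (fun u : Fin n => lnF n u.val))
      = 2 * ((n:ℝ)-3)⁻¹ + ((n:ℝ)-3) * ((n:ℝ)-2) := by
  have h1 : (fun u : Fin n => lnF n u.val) ⬝ᵥ ((Ln n).adjMatrix ℝ *ᵥ (fun u : Fin n => lnF n u.val))
      = ∑ v : Fin n, lnF n v.val * lnG n v.val := by
    rw [dotProduct]
    exact Finset.sum_congr rfl fun v _ => by rw [ln_mulVec_lnF hn v]
  rw [h1, Fin.sum_univ_eq_sum_range (fun i => lnF n i * lnG n i) n,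
    sum_range_split (by omega)]
  have hico : ∑ i ∈ Ico 3 n, lnF n i * lnG n i = ((n:ℝ)-3) * ((n:ℝ)-3) := by
    rw [sum_Ico_const' ((n:ℝ)-3) _ (fun i h3 hin => by
        unfold lnF lnG
        rw [if_neg (by omega), if_neg (by omega), if_neg (by omega), if_neg (by omega),
          if_neg (by omega), one_mul]),
      cast_sub3 hn]
  rw [hico]
  norm_num [lnF, lnG]
  ring

lemma ln_Q2 {n : ℕ} (hn : 7 ≤ n) :
    (fun u : Fin n => lnF n u.val) ⬝ᵥ (fun u : Fin n => lnF n u.val)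
      = ((n:ℝ)-3)⁻¹ ^ 2 + ((n:ℝ) - 2) := by
  rw [dotProduct, Fin.sum_univ_eq_sum_range (fun i => lnF n i * lnF n i) n,
    sum_range_split (by omega)]
  have hico : ∑ i ∈ Ico 3 n, lnF n i * lnF n i = (n:ℝ) - 3 := by
    rw [sum_Ico_const' 1 _ (fun i h3 hin => by
        unfold lnF
        rw [if_neg (by omega), if_neg (by omega), one_mul]),
      cast_sub3 hn, mul_one]
  rw [hico]
  have hF0 : lnF n 0 = 0 := by norm_num [lnF]
  have hF1 : lnF n 1 = ((n:ℝ)-3)⁻¹ := by norm_num [lnF]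
  have hF2 : lnF n 2 = 1 := by norm_num [lnF]
  rw [hF0, hF1, hF2]
  ring

lemma ln_exists_big_eig {n : ℕ} (hn : 7 ≤ n) [DecidableRel (Ln n).Adj] :
    ∃ (x : ℝ) (f : Fin n → ℝ), f ≠ 0 ∧ (Ln n).adjMatrix ℝ *ᵥ f = x • f ∧ (n:ℝ) - 3 < x := by
  classical
  set A := (Ln n).adjMatrix ℝ with hAdef
  have hH : A.IsHermitian := by
    rw [Matrix.IsHermitian, conjTranspose_eq_transpose_of_trivial]
    exact SimpleGraph.transpose_adjMatrix (Ln n)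
  by_contra hcon
  push_neg at hcon
  have hc : ∀ i, hH.eigenvalues i ≤ (n:ℝ) - 3 := by
    intro i
    refine hcon (hH.eigenvalues i) (hH.eigenvectorBasis i) ?_ (hH.mulVec_eigenvectorBasis i)
    have hne := hH.eigenvectorBasis.orthonormal.ne_zero i
    intro hzero
    exact hne (by ext j; exact congrFun hzero j)
  have hq := quad_form_le hH hc (fun u : Fin n => lnF n u.val)
  rw [ln_Q1 hn, ln_Q2 hn] at hq
  have hn' : (7:ℝ) ≤ (n:ℝ) := by exact_mod_cast hn
  have h3 : (0:ℝ) < (n:ℝ) - 3 := by linarith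
  have hinv : ((n:ℝ)-3) * ((n:ℝ)-3)⁻¹ = 1 := mul_inv_cancel₀ (ne_of_gt h3)
  have hinvpos : 0 < ((n:ℝ)-3)⁻¹ := inv_pos.mpr h3
  nlinarith [sq_nonneg (((n:ℝ)-3)⁻¹)]

lemma ln_main_aux {n : ℕ} (hn : 7 ≤ n) [DecidableRel (Ln n).Adj] :
    ((n:ℝ) - 3 < sSup {x : ℝ | ∃ f : Fin n → ℝ, f ≠ 0 ∧
        (SimpleGraph.adjMatrix ℝ (Ln n)) *ᵥ f = x • f}) ∧
      sSup {x : ℝ | ∃ f : Fin n → ℝ, f ≠ 0 ∧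
        (SimpleGraph.adjMatrix ℝ (Ln n)) *ᵥ f = x • f} < (n:ℝ) - 3 + 1 / ((n:ℝ) - 3) := by
  have hn' : (7:ℝ) ≤ (n:ℝ) := by exact_mod_cast hn
  have h3 : (0:ℝ) < (n:ℝ) - 3 := by linarith
  set S : Set ℝ := {x : ℝ | ∃ f : Fin n → ℝ, f ≠ 0 ∧
    (SimpleGraph.adjMatrix ℝ (Ln n)) *ᵥ f = x • f} with hSdef
  set c : ℝ := Real.sqrt ((n:ℝ)^2 - 6*n + 11) with hc
  have hub : ∀ x ∈ S, x ≤ c := by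
    rintro x ⟨f, hf, hAf⟩
    have hsq := ln_eig_sq hn hf hAf
    calc x ≤ |x| := le_abs_self x
      _ = Real.sqrt (x^2) := (Real.sqrt_sq_eq_abs x).symm
      _ ≤ c := Real.sqrt_le_sqrt hsq
  constructor
  · obtain ⟨x, f, hf, hAf, hx⟩ := ln_exists_big_eig (n := n) hn
    have hmem : x ∈ S := ⟨f, hf, hAf⟩
    have hle := le_csSup ⟨c, fun y hy => hub y hy⟩ hmem
    linarith
  · have h1 : sSup S ≤ c := Real.sSup_le hub (Real.sqrt_nonneg _)
    have h2 : c < (n:ℝ) - 3 + 1/((n:ℝ)-3) := by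
      have hq : (0:ℝ) < 1/((n:ℝ)-3) := one_div_pos.mpr h3
      rw [hc, Real.sqrt_lt' (by linarith)]
      have hinv : ((n:ℝ)-3) * (1/((n:ℝ)-3)) = 1 := by field_simp
      nlinarith [mul_pos hq hq]
    linarith


theorem specRad_Ln_bounds (n : ℕ) (hn : 7 ≤ n) :
    (n : ℝ) - 3 < specRad (Ln n) ∧
      specRad (Ln n) < (n : ℝ) - 3 + 1 / ((n : ℝ) - 3) := by
  letI := Classical.decRel (Ln n).Adj
  exact ln_main_aux hn
end

section
/- For n ≥ 8, the spectral radius of B_n satisfies n − 4 < ρ(B_n) < n − 4 + 2/(n−4). -/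
set_option linter.unusedSectionVars false

open Matrix Finset

variable {n : ℕ}
lemma bn_adj (i x : Fin n) : (Bn n).Adj i x ↔ i ≠ x ∧
    ((3 ≤ i.val ∧ 3 ≤ x.val) ∨ (i.val = 0 ∧ x.val = 1) ∨ (i.val = 1 ∧ x.val = 2) ∨
     (i.val = 0 ∧ x.val = 3) ∨ (i.val = 2 ∧ x.val = 4) ∨
     (x.val = 0 ∧ i.val = 1) ∨ (x.val = 1 ∧ i.val = 2) ∨
     (x.val = 0 ∧ i.val = 3) ∨ (x.val = 2 ∧ i.val = 4)) := by
  simp only [Bn, SimpleGraph.fromRel_adj, ne_eq]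
  constructor
  · intro h
    obtain ⟨hne, h2⟩ := h
    refine ⟨hne, ?_⟩
    omega
  · intro h
    obtain ⟨hne, h2⟩ := h
    refine ⟨hne, ?_⟩
    rcases h2 with h|h|h|h|h|h|h|h|h
    · exact Or.inl (Or.inl h)
    · exact Or.inl (Or.inr (Or.inl h))
    · exact Or.inl (Or.inr (Or.inr (Or.inl h)))
    · exact Or.inl (Or.inr (Or.inr (Or.inr (Or.inl h))))
    · exact Or.inl (Or.inr (Or.inr (Or.inr (Or.inr h))))
    · exact Or.inr (Or.inr (Or.inl h))
    · exact Or.inr (Or.inr (Or.inr (Or.inl h)))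
    · exact Or.inr (Or.inr (Or.inr (Or.inr (Or.inl h))))
    · exact Or.inr (Or.inr (Or.inr (Or.inr (Or.inr h))))

noncomputable def Sc (n : ℕ) (f : Fin n → ℝ) : ℝ :=
  ∑ j ∈ Finset.univ.filter (fun j : Fin n => 3 ≤ j.val), f j

variable [DecidableRel (Bn n).Adj]

lemma row_small (f : Fin n → ℝ) {i j k : Fin n}
    (h : ∀ x : Fin n, (Bn n).Adj i x ↔ (x = j ∨ x = k)) (hjk : j ≠ k) :
    ((Bn n).adjMatrix ℝ *ᵥ f) i = f j + f k := by
  rw [SimpleGraph.adjMatrix_mulVec_apply]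
  have hnb : (Bn n).neighborFinset i = {j, k} := by
    ext x
    simp [SimpleGraph.mem_neighborFinset, h x]
  rw [hnb, Finset.sum_pair hjk]

lemma row0_s7 (f : Fin n → ℝ) {i j k : Fin n} (hi : i.val = 0) (hj : j.val = 1)
    (hk : k.val = 3) : ((Bn n).adjMatrix ℝ *ᵥ f) i = f j + f k := by
  refine row_small f (fun x => ?_) (by intro h; rw [h] at hj; omega)
  simp only [bn_adj, ne_eq, Fin.ext_iff, hi, hj, hk]
  norm_num
  omega

lemma row1_s7 (f : Fin n → ℝ) {i j k : Fin n} (hi : i.val = 1) (hj : j.val = 0)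
    (hk : k.val = 2) : ((Bn n).adjMatrix ℝ *ᵥ f) i = f j + f k := by
  refine row_small f (fun x => ?_) (by intro h; rw [h] at hj; omega)
  simp only [bn_adj, ne_eq, Fin.ext_iff, hi, hj, hk]
  norm_num
  omega

lemma row2_s7 (f : Fin n → ℝ) {i j k : Fin n} (hi : i.val = 2) (hj : j.val = 1)
    (hk : k.val = 4) : ((Bn n).adjMatrix ℝ *ᵥ f) i = f j + f k := by
  refine row_small f (fun x => ?_) (by intro h; rw [h] at hj; omega)
  simp only [bn_adj, ne_eq, Fin.ext_iff, hi, hj, hk]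
  norm_num
  omega

lemma row_clique (f : Fin n → ℝ) {i : Fin n} (hi : 5 ≤ i.val) :
    ((Bn n).adjMatrix ℝ *ᵥ f) i = Sc n f - f i := by
  rw [SimpleGraph.adjMatrix_mulVec_apply]
  have hnb : (Bn n).neighborFinset i
      = (Finset.univ.filter (fun j : Fin n => 3 ≤ j.val)).erase i := by
    ext x
    simp only [SimpleGraph.mem_neighborFinset, Finset.mem_erase, Finset.mem_filter,
      Finset.mem_univ, true_and, bn_adj, Fin.ext_iff, ne_eq]
    omega
  rw [hnb, Finset.sum_erase_eq_sub (by simp; omega), Sc]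

lemma row34 (f : Fin n → ℝ) {i j : Fin n} (hij : i.val = 3 ∧ j.val = 0 ∨ i.val = 4 ∧ j.val = 2) :
    ((Bn n).adjMatrix ℝ *ᵥ f) i = Sc n f - f i + f j := by
  rw [SimpleGraph.adjMatrix_mulVec_apply]
  have hnb : (Bn n).neighborFinset i
      = insert j ((Finset.univ.filter (fun x : Fin n => 3 ≤ x.val)).erase i) := by
    ext x
    simp only [SimpleGraph.mem_neighborFinset, Finset.mem_insert, Finset.mem_erase,
      Finset.mem_filter, Finset.mem_univ, true_and, bn_adj, Fin.ext_iff, ne_eq]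
    omega
  rw [hnb, Finset.sum_insert (by simp; omega),
    Finset.sum_erase_eq_sub (by simp; omega), Sc]
  ring

lemma card_small (hn : 8 ≤ n) (k : ℕ) (hk : k ≤ 5) :
    (Finset.univ.filter (fun j : Fin n => j.val < k)).card = k := by
  have h : (Finset.univ.filter (fun j : Fin n => j.val < k)).card
      = (Finset.Iio (⟨k, by omega⟩ : Fin n)).card := by
    congr 1
    ext x
    simp [Fin.lt_def]
  rw [h, Fin.card_Iio]

lemma card_cq (hn : 8 ≤ n) :
    (Finset.univ.filter (fun j : Fin n => 3 ≤ j.val)).card = n - 3 := by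
  have := Finset.card_filter_add_card_filter_not
    (s := (Finset.univ : Finset (Fin n))) (p := fun j : Fin n => j.val < 3)
  rw [card_small hn 3 (by omega)] at this
  have he : Finset.univ.filter (fun j : Fin n => ¬ j.val < 3)
      = Finset.univ.filter (fun j : Fin n => 3 ≤ j.val) := by
    ext x; simp
  rw [he] at this
  simp only [Finset.card_univ, Fintype.card_fin] at this
  omega

lemma card_c5 (hn : 8 ≤ n) :
    (Finset.univ.filter (fun j : Fin n => 5 ≤ j.val)).card = n - 5 := by
  have := Finset.card_filter_add_card_filter_not
    (s := (Finset.univ : Finset (Fin n))) (p := fun j : Fin n => j.val < 5)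
  rw [card_small hn 5 (by omega)] at this
  have he : Finset.univ.filter (fun j : Fin n => ¬ j.val < 5)
      = Finset.univ.filter (fun j : Fin n => 5 ≤ j.val) := by
    ext x; simp
  rw [he] at this
  simp only [Finset.card_univ, Fintype.card_fin] at this
  omega

lemma clique_split (hn : 8 ≤ n) :
    Finset.univ.filter (fun j : Fin n => 3 ≤ j.val)
      = insert (⟨3, by omega⟩ : Fin n) (insert (⟨4, by omega⟩ : Fin n)
          (Finset.univ.filter (fun j : Fin n => 5 ≤ j.val))) := by
  ext x
  simp only [Finset.mem_filter, Finset.mem_univ, true_and, Finset.mem_insert, Fin.ext_iff]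
  omega

lemma eig_poly (hn : 8 ≤ n) (f : Fin n → ℝ) (x : ℝ) (hfne : f ≠ 0)
    (heq : (Bn n).adjMatrix ℝ *ᵥ f = x • f) (hx : (n : ℝ) - 4 < x) :
    x^2*(x+1)*(x-((n:ℝ)-4)) = 2*(x+1)*(x-((n:ℝ)-4)) + x*(x-((n:ℝ)-4)+2) := by
  have hm : (4:ℝ) ≤ (n:ℝ) - 4 := by
    have : (8:ℝ) ≤ (n:ℝ) := by exact_mod_cast hn
    linarith
  obtain ⟨v0, hv0⟩ : ∃ v : Fin n, v.val = 0 := ⟨⟨0, by omega⟩, rfl⟩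
  obtain ⟨v1, hv1⟩ : ∃ v : Fin n, v.val = 1 := ⟨⟨1, by omega⟩, rfl⟩
  obtain ⟨v2, hv2⟩ : ∃ v : Fin n, v.val = 2 := ⟨⟨2, by omega⟩, rfl⟩
  obtain ⟨v3, hv3⟩ : ∃ v : Fin n, v.val = 3 := ⟨⟨3, by omega⟩, rfl⟩
  obtain ⟨v4, hv4⟩ : ∃ v : Fin n, v.val = 4 := ⟨⟨4, by omega⟩, rfl⟩
  have hv3e : (⟨3, by omega⟩ : Fin n) = v3 := Fin.ext (by rw [hv3])
  have hv4e : (⟨4, by omega⟩ : Fin n) = v4 := Fin.ext (by rw [hv4])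
  have hpt : ∀ i, ((Bn n).adjMatrix ℝ *ᵥ f) i = x * f i := fun i => by rw [heq]; simp
  have e0 : x * f v0 = f v1 + f v3 := by rw [← hpt]; exact row0_s7 f hv0 hv1 hv3
  have e1 : x * f v1 = f v0 + f v2 := by rw [← hpt]; exact row1_s7 f hv1 hv0 hv2
  have e2 : x * f v2 = f v1 + f v4 := by rw [← hpt]; exact row2_s7 f hv2 hv1 hv4
  have e3 : x * f v3 = Sc n f - f v3 + f v0 := by
    rw [← hpt]; exact row34 f (Or.inl ⟨hv3, hv0⟩)
  have e4 : x * f v4 = Sc n f - f v4 + f v2 := by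
    rw [← hpt]; exact row34 f (Or.inr ⟨hv4, hv2⟩)
  have hclq : ∀ i : Fin n, 5 ≤ i.val → x * f i = Sc n f - f i := fun i hi => by
    rw [← hpt]; exact row_clique f hi
  -- the sum over the clique
  have hv3ni : v3 ∉ insert v4 (Finset.univ.filter (fun j : Fin n => 5 ≤ j.val)) := by
    simp [Fin.ext_iff, hv3, hv4]
  have hv4ni : v4 ∉ Finset.univ.filter (fun j : Fin n => 5 ≤ j.val) := by
    simp [hv4]
  have hS : Sc n f = f v3 + f v4 + ∑ j ∈ Finset.univ.filter (fun j : Fin n => 5 ≤ j.val), f j := by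
    rw [Sc, clique_split hn, hv3e, hv4e, Finset.sum_insert hv3ni, Finset.sum_insert hv4ni]
    ring
  have hsum5 : x * (Sc n f - f v3 - f v4)
      = ((n:ℝ) - 5) * Sc n f - (Sc n f - f v3 - f v4) := by
    have h1 : ∑ j ∈ Finset.univ.filter (fun j : Fin n => 5 ≤ j.val), (x * f j)
        = ∑ j ∈ Finset.univ.filter (fun j : Fin n => 5 ≤ j.val), (Sc n f - f j) :=
      Finset.sum_congr rfl (fun j hj => hclq j (by simpa using hj))
    rw [← Finset.mul_sum, Finset.sum_sub_distrib, Finset.sum_const, card_c5 hn,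
      nsmul_eq_mul] at h1
    have hc : ((n - 5 : ℕ) : ℝ) = (n:ℝ) - 5 := by
      have : (5:ℕ) ≤ n := by omega
      push_cast [this]
      ring
    rw [hc] at h1
    have h2 : ∑ j ∈ Finset.univ.filter (fun j : Fin n => 5 ≤ j.val), f j
        = Sc n f - f v3 - f v4 := by linarith [hS]
    rw [h2] at h1
    linarith [h1]
  have esum : (x - ((n:ℝ)-4)) * Sc n f = f v0 + f v2 := by
    linear_combination hsum5 + e3 + e4
  -- nondegeneracy
  have ha : f v0 + f v2 ≠ 0 := by
    intro h0
    have hx4 : (4:ℝ) < x := by linarith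
    have hS0 : Sc n f = 0 := by
      have hne : x - ((n:ℝ)-4) ≠ 0 := by linarith
      have := esum
      rw [h0] at this
      exact (mul_eq_zero.1 this).resolve_left hne
    have hf1 : f v1 = 0 := by
      rw [h0] at e1
      exact (mul_eq_zero.1 e1).resolve_left (by linarith)
    have h1 : x * f v0 = f v3 := by rw [e0, hf1]; ring
    have h2 : x * f v3 = - f v3 + f v0 := by rw [e3, hS0]; ring
    have h3 : (x*x + x - 1) * f v0 = 0 := by linear_combination x * h1 + h2 + h1
    have hf0 : f v0 = 0 :=
      (mul_eq_zero.1 h3).resolve_left (by nlinarith)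
    have hf3 : f v3 = 0 := by rw [← h1, hf0]; ring
    have hf2 : f v2 = 0 := by linarith
    have hf4 : f v4 = 0 := by linear_combination x * hf2 - e2 - hf1
    have hf5 : ∀ i : Fin n, 5 ≤ i.val → f i = 0 := by
      intro i hi
      have hcc := hclq i hi
      rw [hS0] at hcc
      have h4 : (x + 1) * f i = 0 := by linarith
      exact (mul_eq_zero.1 h4).resolve_left (by linarith)
    apply hfne
    funext i
    have hlt := i.isLt
    show f i = 0
    rcases Nat.lt_or_ge i.val 5 with h5 | h5
    · have hd : i.val = 0 ∨ i.val = 1 ∨ i.val = 2 ∨ i.val = 3 ∨ i.val = 4 := by omega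
      rcases hd with h | h | h | h | h
      · rw [show i = v0 from Fin.ext (by omega)]; exact hf0
      · rw [show i = v1 from Fin.ext (by omega)]; exact hf1
      · rw [show i = v2 from Fin.ext (by omega)]; exact hf2
      · rw [show i = v3 from Fin.ext (by omega)]; exact hf3
      · rw [show i = v4 from Fin.ext (by omega)]; exact hf4
    · exact hf5 i h5
  -- the polynomial identity
  have hP : (x^2*(x+1)*(x-((n:ℝ)-4)) - (2*(x+1)*(x-((n:ℝ)-4)) + x*(x-((n:ℝ)-4)+2)))
      * (f v0 + f v2) = 0 := by
    linear_combination (x*(x+1)*(x-((n:ℝ)-4))) * e0 + (2*(x+1)*(x-((n:ℝ)-4))) * e1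
      + (x*(x+1)*(x-((n:ℝ)-4))) * e2 + (x*(x-((n:ℝ)-4))) * e3 + (x*(x-((n:ℝ)-4))) * e4
      + (2*x) * esum
  have := (mul_eq_zero.1 hP).resolve_right ha
  linarith [this]

lemma Ppos {m y : ℝ} (hm : 4 ≤ m) (hy : m + 2/m ≤ y) :
    2*(y+1)*(y-m) + y*(y-m+2) < y^2*(y+1)*(y-m) := by
  have hm0 : (0:ℝ) < m := by linarith
  have h2m : 0 < 2/m := by positivity
  have hym : m ≤ y := by linarith
  have hy4 : 4 < y := by linarith
  have ht : 2 ≤ m * (y - m) := by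
    have h := mul_le_mul_of_nonneg_left hy hm0.le
    have : m * (m + 2/m) = m*m + 2 := by field_simp
    nlinarith [h]
  have hmy : m * y ≤ y * y := mul_le_mul_of_nonneg_right hym (by linarith)
  have hcube : m * y < y^3 + y^2 - 3*y - 2 := by nlinarith [hy4, hmy]
  have hC0 : (0:ℝ) ≤ y^3 + y^2 - 3*y - 2 := by nlinarith [hy4]
  have htc := mul_le_mul_of_nonneg_right ht hC0
  -- m * Q = (m*(y-m)) * C - 2*m*y where C = y^3+y^2-3y-2
  have hQ : 0 < m * (y^2*(y+1)*(y-m) - (2*(y+1)*(y-m) + y*(y-m+2))) := by nlinarith [htc, hcube]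
  nlinarith [hQ, hm0]

lemma exists_root (m : ℝ) (hm : 4 ≤ m) :
    ∃ lam : ℝ, m < lam ∧ lam < m + 2/m ∧
      lam^2*(lam+1)*(lam-m) = 2*(lam+1)*(lam-m) + lam*(lam-m+2) := by
  set g : ℝ → ℝ := fun y => y^2*(y+1)*(y-m) - (2*(y+1)*(y-m) + y*(y-m+2)) with hg
  have hm0 : (0:ℝ) < m := by linarith
  have h2m : 0 < 2/m := by positivity
  have hcont : ContinuousOn g (Set.Icc m (m + 2/m)) := by fun_prop
  have hlt : m ≤ m + 2/m := by linarith
  have hgm : g m < 0 := by simp only [hg]; ring_nf; nlinarith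
  have hgm2 : 0 < g (m + 2/m) := by
    have := Ppos hm (le_refl (m + 2/m))
    simp only [hg]
    linarith
  have hsub := intermediate_value_Ioo hlt hcont
  have h0 : (0:ℝ) ∈ Set.Ioo (g m) (g (m + 2/m)) := ⟨hgm, hgm2⟩
  obtain ⟨lam, hmem, hval⟩ := hsub h0
  exact ⟨lam, hmem.1, hmem.2, by simp only [hg] at hval; linarith⟩

noncomputable def evec (n : ℕ) (x m : ℝ) : Fin n → ℝ := fun j =>
  if j.val = 1 then (x-m)/x
  else if j.val < 3 then (x-m)/2
  else if j.val < 5 then (2+(x-m))/(2*(x+1))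
  else 1/(x+1)

lemma evec1 {x m : ℝ} {j : Fin n} (h : j.val = 1) : evec n x m j = (x-m)/x := by
  unfold evec; rw [if_pos h]

lemma evec02 {x m : ℝ} {j : Fin n} (h : j.val = 0 ∨ j.val = 2) :
    evec n x m j = (x-m)/2 := by
  unfold evec; rw [if_neg (by omega), if_pos (by omega)]

lemma evec34 {x m : ℝ} {j : Fin n} (h : j.val = 3 ∨ j.val = 4) :
    evec n x m j = (2+(x-m))/(2*(x+1)) := by
  unfold evec; rw [if_neg (by omega), if_neg (by omega), if_pos (by omega)]

lemma evec5 {x m : ℝ} {j : Fin n} (h : 5 ≤ j.val) : evec n x m j = 1/(x+1) := by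
  unfold evec; rw [if_neg (by omega), if_neg (by omega), if_neg (by omega)]

lemma Sc_evec (hn : 8 ≤ n) {x : ℝ} (hx1 : x + 1 ≠ 0) :
    Sc n (evec n x ((n:ℝ)-4)) = 1 := by
  rw [Sc, clique_split hn, Finset.sum_insert (by simp [Fin.ext_iff]),
    Finset.sum_insert (by simp), evec34 (j := (⟨3, by omega⟩ : Fin n)) (Or.inl rfl),
    evec34 (j := (⟨4, by omega⟩ : Fin n)) (Or.inr rfl)]
  have hconst : ∑ j ∈ Finset.univ.filter (fun j : Fin n => 5 ≤ j.val),
      evec n x ((n:ℝ)-4) j = ((n:ℝ) - 5) * (1/(x+1)) := by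
    rw [Finset.sum_congr rfl (fun j hj => evec5 (by simpa using hj)),
      Finset.sum_const, card_c5 hn, nsmul_eq_mul]
    congr 1
    have : (5:ℕ) ≤ n := by omega
    push_cast [this]
    ring
  rw [hconst]
  have hn8 : (8:ℝ) ≤ (n:ℝ) := by exact_mod_cast hn
  field_simp
  ring

lemma exists_eig (hn : 8 ≤ n) {x : ℝ} (hx : (n:ℝ) - 4 < x) (hm4 : (4:ℝ) ≤ (n:ℝ) - 4)
    (hroot : x^2*(x+1)*(x-((n:ℝ)-4)) = 2*(x+1)*(x-((n:ℝ)-4)) + x*(x-((n:ℝ)-4)+2)) :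
    ∃ f : Fin n → ℝ, f ≠ 0 ∧ (Bn n).adjMatrix ℝ *ᵥ f = x • f := by
  have hx0 : (0:ℝ) < x := by linarith
  have hx1 : (0:ℝ) < x + 1 := by linarith
  refine ⟨evec n x ((n:ℝ)-4), ?_, ?_⟩
  · intro h
    have h5 := congrFun h ⟨5, by omega⟩
    rw [evec5 (by norm_num)] at h5
    simp at h5
    linarith
  · funext i
    rw [Pi.smul_apply, smul_eq_mul]
    have hSc := Sc_evec hn (n := n) (x := x) hx1.ne'
    have hd : i.val = 0 ∨ i.val = 1 ∨ i.val = 2 ∨ i.val = 3 ∨ i.val = 4 ∨ 5 ≤ i.val := by omega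
    rcases hd with h | h | h | h | h | h
    · rw [row0_s7 (evec n x ((n:ℝ)-4)) h (j := ⟨1, by omega⟩) rfl (k := ⟨3, by omega⟩) rfl,
        evec1 rfl, evec34 (Or.inl rfl), evec02 (Or.inl h)]
      field_simp
      linear_combination (-1 : ℝ) * hroot
    · rw [row1_s7 (evec n x ((n:ℝ)-4)) h (j := ⟨0, by omega⟩) rfl (k := ⟨2, by omega⟩) rfl,
        evec02 (Or.inl rfl), evec02 (Or.inr rfl), evec1 h]
      field_simp
      ring
    · rw [row2_s7 (evec n x ((n:ℝ)-4)) h (j := ⟨1, by omega⟩) rfl (k := ⟨4, by omega⟩) rfl,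
        evec1 rfl, evec34 (Or.inr rfl), evec02 (Or.inr h)]
      field_simp
      linear_combination (-1 : ℝ) * hroot
    · rw [row34 (evec n x ((n:ℝ)-4)) (j := ⟨0, by omega⟩) (Or.inl ⟨h, rfl⟩),
        hSc, evec02 (j := (⟨0, by omega⟩ : Fin n)) (Or.inl rfl), evec34 (Or.inl h)]
      field_simp
      ring
    · rw [row34 (evec n x ((n:ℝ)-4)) (j := ⟨2, by omega⟩) (Or.inr ⟨h, rfl⟩),
        hSc, evec02 (j := (⟨2, by omega⟩ : Fin n)) (Or.inr rfl), evec34 (Or.inr h)]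
      field_simp
      ring
    · rw [row_clique (evec n x ((n:ℝ)-4)) h, hSc, evec5 h]
      field_simp
      ring


lemma Sfin [DecidableRel (Bn n).Adj] :
    {x : ℝ | ∃ f : Fin n → ℝ, f ≠ 0 ∧ (Bn n).adjMatrix ℝ *ᵥ f = x • f}.Finite := by
  have h : {x : ℝ | ∃ f : Fin n → ℝ, f ≠ 0 ∧ (Bn n).adjMatrix ℝ *ᵥ f = x • f}
      ⊆ Module.End.HasEigenvalue ((Bn n).adjMatrix ℝ).mulVecLin := by
    rintro x ⟨f, hf, hAf⟩
    show Module.End.HasEigenvalue ((Bn n).adjMatrix ℝ).mulVecLin x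
    rw [Module.End.hasEigenvalue_iff, Submodule.ne_bot_iff]
    exact ⟨f, Module.End.mem_eigenspace_iff.2 (by simpa using hAf), hf⟩
  exact (Module.End.finite_hasEigenvalue ((Bn n).adjMatrix ℝ).mulVecLin).subset h

theorem specRad_Bn_bounds (n : ℕ) (hn : 8 ≤ n) :
    (n : ℝ) - 4 < specRad (Bn n) ∧
      specRad (Bn n) < (n : ℝ) - 4 + 2 / ((n : ℝ) - 4) := by
  have hn8 : (8:ℝ) ≤ (n:ℝ) := by exact_mod_cast hn
  have hm4 : (4:ℝ) ≤ (n:ℝ) - 4 := by linarith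
  obtain ⟨lam, hlam1, hlam2, hlamroot⟩ := exists_root ((n:ℝ)-4) hm4
  letI : DecidableEq (Fin n) := Classical.decEq _
  letI : DecidableRel (Bn n).Adj := Classical.decRel _
  set Sset : Set ℝ :=
    {x : ℝ | ∃ f : Fin n → ℝ, f ≠ 0 ∧ (SimpleGraph.adjMatrix ℝ (Bn n)) *ᵥ f = x • f}
    with hSdef
  have hspec : specRad (Bn n) = sSup Sset := rfl
  have hfin : Sset.Finite := Sfin
  have hmemlam : lam ∈ Sset := by
    obtain ⟨f, hf0, hfeq⟩ := exists_eig hn hlam1 hm4 hlamroot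
    exact ⟨f, hf0, hfeq⟩
  have hbdd : BddAbove Sset := hfin.bddAbove
  have hlow : (n:ℝ) - 4 < sSup Sset := lt_of_lt_of_le hlam1 (le_csSup hbdd hmemlam)
  have hupmem : sSup Sset ∈ Sset := Set.Nonempty.csSup_mem ⟨lam, hmemlam⟩ hfin
  obtain ⟨g, hg0, hgeq⟩ := hupmem
  have hroot2 := eig_poly hn g (sSup Sset) hg0 hgeq hlow
  constructor
  · rw [hspec]; exact hlow
  · rw [hspec]
    by_contra hcon
    push_neg at hcon
    have hp := Ppos hm4 hcon
    linarith [hroot2, hp]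
end

section
/- Let G be a finite simple connected graph with n vertices, m edges, and minimum degree δ. Then ρ(G) ≤ (δ − 1 + √((δ+1)^2 + 4(2m − δn)))/2. -/
open Matrix

theorem specRad_le_hong_bound {V : Type*} [Fintype V] [DecidableEq V]
    (G : SimpleGraph V) [DecidableRel G.Adj] (hG : G.Connected) :
    specRad G ≤ ((G.minDegree : ℝ) - 1 +
      Real.sqrt (((G.minDegree : ℝ) + 1) ^ 2 +
        4 * (2 * (G.edgeFinset.card : ℝ) - (G.minDegree : ℝ) * (Fintype.card V : ℝ)))) / 2 := by
  have hne : Nonempty V := hG.nonempty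
  set n : ℝ := (Fintype.card V : ℝ) with hn
  set m : ℝ := (G.edgeFinset.card : ℝ) with hm
  set d : ℝ := (G.minDegree : ℝ) with hd
  have hd0 : 0 ≤ d := by positivity
  have hsum : ∑ v, (G.degree v : ℝ) = 2 * m := by
    rw [hm]; exact_mod_cast G.sum_degrees_eq_twice_card_edges
  have hdeg : ∀ v, d ≤ (G.degree v : ℝ) := fun v => by
    rw [hd]; exact_mod_cast G.minDegree_le_degree v
  have hmn : d * n ≤ 2 * m := by
    rw [← hsum]
    calc d * n = ∑ _v : V, d := by
          rw [Finset.sum_const, Finset.card_univ, hn]; ring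
    _ ≤ ∑ v, (G.degree v : ℝ) := Finset.sum_le_sum fun v _ => hdeg v
  have hC : 0 ≤ 2 * m - d * n := by linarith
  have hsqrt : d + 1 ≤ Real.sqrt ((d + 1) ^ 2 + 4 * (2 * m - d * n)) :=
    Real.le_sqrt_of_sq_le (by nlinarith)
  have hdB : d ≤ (d - 1 + Real.sqrt ((d + 1) ^ 2 + 4 * (2 * m - d * n))) / 2 := by linarith
  unfold specRad
  apply Real.sSup_le _ (by linarith)
  rintro x ⟨f, hf0, hef⟩
  have hM : (letI := Classical.decEq V; letI := Classical.decRel G.Adj;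
      SimpleGraph.adjMatrix ℝ G) = SimpleGraph.adjMatrix ℝ G := by
    ext i j
    by_cases h : G.Adj i j <;> simp [SimpleGraph.adjMatrix, h]
  rw [hM] at hef
  have key : ∀ v, ∑ w ∈ G.neighborFinset v, f w = x * f v := by
    intro v
    have h1 := congrFun hef v
    rwa [SimpleGraph.adjMatrix_mulVec_apply] at h1
  set g : V → ℝ := fun v => |f v| with hg
  obtain ⟨u, hu⟩ := Finite.exists_max g
  have hc : 0 < g u := by
    obtain ⟨w, hw⟩ : ∃ w, f w ≠ 0 := by
      by_contra h; push_neg at h; exact hf0 (funext h)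
    exact lt_of_lt_of_le (abs_pos.2 hw) (hu w)
  have habs : ∀ v, |x| * g v ≤ ∑ w ∈ G.neighborFinset v, g w := by
    intro v
    rw [hg]; simp only [← abs_mul, ← key v]
    exact Finset.abs_sum_le_sum_abs _ _
  set S : ℝ := ∑ v, g v with hS
  have hg0 : ∀ v, 0 ≤ g v := fun v => abs_nonneg _
  -- swap double sum
  have swap : ∑ v, ∑ w ∈ G.neighborFinset v, g w = ∑ w, (G.degree w : ℝ) * g w := by
    simp_rw [SimpleGraph.neighborFinset_eq_filter, Finset.sum_filter]
    rw [Finset.sum_comm]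
    refine Finset.sum_congr rfl fun w _ => ?_
    rw [Finset.sum_congr rfl fun v _ => if_congr (G.adj_comm v w) rfl rfl,
      ← Finset.sum_filter, Finset.sum_const]
    simp [SimpleGraph.degree, SimpleGraph.neighborFinset_eq_filter, nsmul_eq_mul, mul_comm]
  -- step A
  have stepA : |x| * S ≤ d * S + (2 * m - d * n) * g u := by
    have h1 : |x| * S ≤ ∑ w, (G.degree w : ℝ) * g w := by
      rw [hS, Finset.mul_sum, ← swap]
      exact Finset.sum_le_sum fun v _ => habs v
    have h2 : ∑ w, (G.degree w : ℝ) * g w ≤ d * S + (2 * m - d * n) * g u := by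
      have : ∀ w ∈ Finset.univ, (G.degree w : ℝ) * g w ≤
          d * g w + ((G.degree w : ℝ) - d) * g u := by
        intro w _
        nlinarith [hdeg w, hu w, hg0 w]
      calc ∑ w, (G.degree w : ℝ) * g w ≤ ∑ w, (d * g w + ((G.degree w : ℝ) - d) * g u) :=
            Finset.sum_le_sum this
        _ = d * S + (2 * m - d * n) * g u := by
            rw [Finset.sum_add_distrib, ← Finset.mul_sum, ← Finset.sum_mul, hS]
            congr 2
            rw [Finset.sum_sub_distrib, hsum, Finset.sum_const, Finset.card_univ, hn]
            ring
    linarith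
  -- step B
  have stepB : |x| * g u + g u ≤ S := by
    have h1 : ∑ w ∈ G.neighborFinset u, g w ≤ S - g u := by
      have hsub : G.neighborFinset u ⊆ Finset.univ.erase u := by
        intro w hw
        rw [Finset.mem_erase]
        refine ⟨?_, Finset.mem_univ _⟩
        rw [SimpleGraph.mem_neighborFinset] at hw
        rintro rfl
        exact G.irrefl hw
      calc ∑ w ∈ G.neighborFinset u, g w ≤ ∑ w ∈ Finset.univ.erase u, g w :=
            Finset.sum_le_sum_of_subset_of_nonneg hsub fun w _ _ => hg0 w
        _ = S - g u := by rw [hS, Finset.sum_erase_eq_sub (Finset.mem_univ u)]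
    linarith [habs u]
  rcases le_or_gt |x| d with hxd | hxd
  · linarith [le_abs_self x]
  · have hkey : (|x| + 1) * (|x| - d) ≤ 2 * m - d * n := by
      have h5 : ((|x| + 1) * (|x| - d)) * g u ≤ (2 * m - d * n) * g u := by nlinarith
      exact le_of_mul_le_mul_right h5 hc
    have h2 : (2 * |x| - (d - 1)) ^ 2 ≤ (d + 1) ^ 2 + 4 * (2 * m - d * n) := by nlinarith
    have h3 : 2 * |x| - (d - 1) ≤ Real.sqrt ((d + 1) ^ 2 + 4 * (2 * m - d * n)) :=
      Real.le_sqrt_of_sq_le h2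
    linarith [le_abs_self x]
end

section
/- Let G be a finite simple connected graph with n vertices and m edges with minimum degree at least 1. Then ρ(G) ≤ √(2m − n + 1). -/
open Matrix

open Finset in
lemma key_eig {V : Type*} [Fintype V] [DecidableEq V]
    (G : SimpleGraph V) [inst : DecidableRel G.Adj] (hG : G.Connected)
    (hδ : ∀ v, 1 ≤ G.degree v)
    (x : ℝ) (f : V → ℝ) (hf0 : f ≠ 0) (hf : (SimpleGraph.adjMatrix ℝ G) *ᵥ f = x • f) :
    x ^ 2 ≤ 2 * (G.edgeFinset.card : ℝ) - (Fintype.card V : ℝ) + 1 := by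
  have hne : (Finset.univ : Finset V).Nonempty := univ_nonempty_iff.mpr hG.nonempty
  obtain ⟨u, -, hu⟩ := Finset.exists_max_image Finset.univ (fun v => |f v|) hne
  have hfu : 0 < |f u| := by
    by_contra h
    push_neg at h
    apply hf0
    funext w
    have := hu w (mem_univ w)
    have : |f w| ≤ 0 := le_trans this h
    simpa [abs_nonpos_iff] using this
  -- compute (A *ᵥ (A *ᵥ f)) u = x^2 * f u
  have h2 : (SimpleGraph.adjMatrix ℝ G) *ᵥ ((SimpleGraph.adjMatrix ℝ G) *ᵥ f) = (x ^ 2) • f := by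
    rw [hf, mulVec_smul, hf, smul_smul, sq]
  have heq : x ^ 2 * f u = ∑ v ∈ G.neighborFinset u, ∑ w ∈ G.neighborFinset v, f w := by
    have := congrFun h2 u
    rw [SimpleGraph.adjMatrix_mulVec_apply] at this
    simp only [Pi.smul_apply, smul_eq_mul] at this
    rw [← this]
    refine Finset.sum_congr rfl fun v _ => ?_
    rw [SimpleGraph.adjMatrix_mulVec_apply]
  -- degree sum bound
  have hdegsum : ∑ v ∈ G.neighborFinset u, G.degree v + (Fintype.card V - 1)
      ≤ 2 * G.edgeFinset.card := by
    have hsplit := Finset.sum_add_sum_compl (G.neighborFinset u) (fun v => G.degree v)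
    rw [SimpleGraph.sum_degrees_eq_twice_card_edges] at hsplit
    have hu_mem : u ∈ (G.neighborFinset u)ᶜ := by simp
    have hcomp : G.degree u + ((G.neighborFinset u)ᶜ.card - 1)
        ≤ ∑ v ∈ (G.neighborFinset u)ᶜ, G.degree v := by
      rw [← Finset.sum_erase_add _ _ hu_mem]
      have h1 : ((G.neighborFinset u)ᶜ.erase u).card ≤ ∑ v ∈ (G.neighborFinset u)ᶜ.erase u, G.degree v := by
        calc ((G.neighborFinset u)ᶜ.erase u).card = ∑ v ∈ (G.neighborFinset u)ᶜ.erase u, 1 := by simp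
          _ ≤ _ := Finset.sum_le_sum fun v _ => hδ v
      have : ((G.neighborFinset u)ᶜ.erase u).card = (G.neighborFinset u)ᶜ.card - 1 :=
        Finset.card_erase_of_mem hu_mem
      omega
    have hcard : (G.neighborFinset u)ᶜ.card = Fintype.card V - G.degree u := by
      rw [Finset.card_compl, SimpleGraph.card_neighborFinset_eq_degree]
    have hdlt : G.degree u < Fintype.card V := G.degree_lt_card_verts u
    omega
  -- real bound on the sum
  have hsum : |x ^ 2 * f u| ≤ (∑ v ∈ G.neighborFinset u, G.degree v : ℕ) * |f u| := by
    rw [heq]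
    calc |∑ v ∈ G.neighborFinset u, ∑ w ∈ G.neighborFinset v, f w|
        ≤ ∑ v ∈ G.neighborFinset u, |∑ w ∈ G.neighborFinset v, f w| := Finset.abs_sum_le_sum_abs _ _
      _ ≤ ∑ v ∈ G.neighborFinset u, ∑ w ∈ G.neighborFinset v, |f w| :=
          Finset.sum_le_sum fun v _ => Finset.abs_sum_le_sum_abs _ _
      _ ≤ ∑ v ∈ G.neighborFinset u, ∑ w ∈ G.neighborFinset v, |f u| :=
          Finset.sum_le_sum fun v _ => Finset.sum_le_sum fun w _ => hu w (mem_univ w)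
      _ = ∑ v ∈ G.neighborFinset u, (G.degree v : ℝ) * |f u| := by
          refine Finset.sum_congr rfl fun v _ => ?_
          rw [Finset.sum_const, SimpleGraph.card_neighborFinset_eq_degree, nsmul_eq_mul]
      _ = (∑ v ∈ G.neighborFinset u, G.degree v : ℕ) * |f u| := by
          rw [← Finset.sum_mul]; push_cast; ring
  have hx2 : x ^ 2 ≤ (∑ v ∈ G.neighborFinset u, G.degree v : ℕ) := by
    have : x ^ 2 * |f u| ≤ (∑ v ∈ G.neighborFinset u, G.degree v : ℕ) * |f u| := by
      calc x ^ 2 * |f u| = |x ^ 2| * |f u| := by rw [abs_of_nonneg (sq_nonneg x)]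
        _ = |x ^ 2 * f u| := (abs_mul _ _).symm
        _ ≤ _ := hsum
    exact le_of_mul_le_mul_right this hfu
  have hcard1 : 1 ≤ Fintype.card V := Fintype.card_pos_iff.mpr hG.nonempty
  have := hdegsum
  have hcast : ((∑ v ∈ G.neighborFinset u, G.degree v : ℕ) : ℝ)
      ≤ 2 * (G.edgeFinset.card : ℝ) - (Fintype.card V : ℝ) + 1 := by
    have h' : ∑ v ∈ G.neighborFinset u, G.degree v + Fintype.card V ≤ 2 * G.edgeFinset.card + 1 := by omega
    have := Nat.cast_le (α := ℝ).mpr h'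
    push_cast at this ⊢
    linarith
  linarith

theorem specRad_le_sqrt_of_minDegree_one {V : Type*} [Fintype V] [DecidableEq V]
    (G : SimpleGraph V) [DecidableRel G.Adj] (hG : G.Connected)
    (hδ : 1 ≤ G.minDegree) :
    specRad G ≤ Real.sqrt (2 * (G.edgeFinset.card : ℝ) - (Fintype.card V : ℝ) + 1) := by
  have hδ' : ∀ v, 1 ≤ G.degree v := fun v => le_trans hδ (G.minDegree_le_degree v)
  rw [specRad]
  apply Real.sSup_le
  · rintro x ⟨f, hf0, hf⟩
    rcases le_or_gt x 0 with hx | hx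
    · exact le_trans hx (Real.sqrt_nonneg _)
    · rw [Real.le_sqrt' hx]
      have hinst : Classical.decRel G.Adj = ‹DecidableRel G.Adj› := Subsingleton.elim _ _
      rw [hinst] at hf
      exact key_eig G hG hδ' x f hf0 hf
  · exact Real.sqrt_nonneg _
end

section
/- Let G be a connected graph on n ≥ 7 vertices. If ρ(G) ≥ n − 3 + 1/(n−3), then G contains a homeomorphically irreducible spanning tree. -/
open Matrix
open Finset

section HISTAux
set_option maxHeartbeats 1000000

set_option linter.unusedSectionVars false

lemma exists_eig_s15 {V : Type*} [Fintype V] [DecidableEq V] (G : SimpleGraph V) [DecidableRel G.Adj]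
    (c : ℝ) (hc : 0 < c) (h : c ≤ specRad G) :
    ∃ (x : ℝ) (f : V → ℝ), c ≤ x ∧ f ≠ 0 ∧ (SimpleGraph.adjMatrix ℝ G) *ᵥ f = x • f := by
  classical
  set S : Set ℝ := {x : ℝ | ∃ f : V → ℝ, f ≠ 0 ∧ (SimpleGraph.adjMatrix ℝ G) *ᵥ f = x • f} with hS
  have hAdj : @SimpleGraph.adjMatrix ℝ V G (Classical.decRel G.Adj) _ _ = SimpleGraph.adjMatrix ℝ G := by
    ext i j; by_cases hij : G.Adj i j <;> simp [hij]
  have hspec : specRad G = sSup S := by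
    rw [specRad, hAdj]
  have hint : IsIntegral ℝ (Matrix.mulVecLin (SimpleGraph.adjMatrix ℝ G)) :=
    Algebra.IsIntegral.isIntegral _
  have hne0 : minpoly ℝ (Matrix.mulVecLin (SimpleGraph.adjMatrix ℝ G)) ≠ 0 :=
    minpoly.ne_zero hint
  have hfin : S.Finite := by
    apply Set.Finite.subset (Polynomial.finite_setOf_isRoot hne0)
    rintro x ⟨f, hf0, hf⟩
    have : Module.End.HasEigenvalue (Matrix.mulVecLin (SimpleGraph.adjMatrix ℝ G)) x := by
      apply Module.End.hasEigenvalue_of_hasEigenvector (x := f)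
      refine ⟨Module.End.mem_eigenspace_iff.2 ?_, hf0⟩
      simpa [Matrix.mulVecLin_apply] using hf
    exact Module.End.hasEigenvalue_iff_isRoot.1 this
  have hne : S.Nonempty := by
    by_contra h0
    rw [Set.not_nonempty_iff_eq_empty] at h0
    rw [hspec, h0, Real.sSup_empty] at h
    linarith
  have hmem := hne.csSup_mem hfin
  rw [hspec] at h
  obtain ⟨f, hf0, hf⟩ := hmem
  exact ⟨sSup S, f, h, hf0, hf⟩


variable {V : Type*} [Fintype V] [DecidableEq V] (G : SimpleGraph V) [DecidableRel G.Adj]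

lemma subeig {f : V → ℝ} {lam : ℝ} (hlam : 0 ≤ lam)
    (hf : (SimpleGraph.adjMatrix ℝ G) *ᵥ f = lam • f) (i : V) :
    lam * |f i| ≤ ∑ j ∈ G.neighborFinset i, |f j| := by
  have h1 : (SimpleGraph.adjMatrix ℝ G *ᵥ f) i = lam * f i := by rw [hf]; rfl
  rw [SimpleGraph.adjMatrix_mulVec_apply] at h1
  calc lam * |f i| = |lam * f i| := by rw [abs_mul, abs_of_nonneg hlam]
    _ = |∑ j ∈ G.neighborFinset i, f j| := by rw [h1]
    _ ≤ ∑ j ∈ G.neighborFinset i, |f j| := Finset.abs_sum_le_sum_abs _ _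

lemma maxdeg {f : V → ℝ} (hf0 : f ≠ 0) {lam : ℝ} (hlam : 0 ≤ lam)
    (hf : (SimpleGraph.adjMatrix ℝ G) *ᵥ f = lam • f) :
    ∃ i : V, 0 < |f i| ∧ (∀ j, |f j| ≤ |f i|) ∧ lam ≤ G.degree i := by
  have hne : (Finset.univ : Finset V).Nonempty := by
    rcases Function.ne_iff.1 hf0 with ⟨j, hj⟩
    exact ⟨j, mem_univ j⟩
  obtain ⟨i, -, hi⟩ := Finset.exists_max_image univ (fun j => |f j|) hne
  have hmax : ∀ j, |f j| ≤ |f i| := fun j => hi j (mem_univ j)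
  have hpos : 0 < |f i| := by
    rcases Function.ne_iff.1 hf0 with ⟨j, hj⟩
    exact lt_of_lt_of_le (abs_pos.2 hj) (hmax j)
  refine ⟨i, hpos, hmax, ?_⟩
  have h := subeig G hlam hf i
  have h2 : ∑ j ∈ G.neighborFinset i, |f j| ≤ (G.degree i : ℝ) * |f i| := by
    rw [← SimpleGraph.card_neighborFinset_eq_degree]
    calc ∑ j ∈ G.neighborFinset i, |f j| ≤ ∑ _j ∈ G.neighborFinset i, |f i| :=
          Finset.sum_le_sum (fun j _ => hmax j)
      _ = (G.neighborFinset i).card * |f i| := by rw [Finset.sum_const, nsmul_eq_mul]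
  have := h.trans h2
  nlinarith


lemma no_reach {G : SimpleGraph V} {C : Set V} (hC : ∀ a b, G.Adj a b → a ∈ C → b ∈ C)
    {x y : V} (hx : x ∈ C) (hy : y ∉ C) : ¬ G.Reachable x y := by
  intro h
  obtain ⟨p⟩ := h
  have key : ∀ (z y' : V), G.Walk z y' → z ∈ C → y' ∉ C → False := by
    intro z y' q
    induction q with
    | nil => exact fun hz hy' => hy' hz
    | cons h' p' ih => exact fun hz hy' => ih (hC _ _ h' hz) hy'
  exact key x y p hx hy

lemma star_hist (G : SimpleGraph V) (v : V) (hv : ∀ y, y ≠ v → G.Adj v y)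
    (hcard : 7 ≤ Fintype.card V) : HasHIST G := by
  classical
  set T : SimpleGraph V := SimpleGraph.fromRel (fun a _ => a = v) with hT
  have hadj : ∀ a b, T.Adj a b ↔ a ≠ b ∧ (a = v ∨ b = v) := fun a b =>
    SimpleGraph.fromRel_adj _ a b
  refine ⟨T, ?_, ⟨?_, ?_⟩, ?_⟩
  · intro a b hab
    rw [hadj] at hab
    obtain ⟨h2, h1⟩ := hab
    rcases h1 with rfl | rfl
    · exact hv b (Ne.symm h2)
    · exact (hv a h2).symm
  · -- Connected
    have hne : Nonempty V := by
      have : 0 < Fintype.card V := by omega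
      exact Fintype.card_pos_iff.mp this
    refine ⟨fun a b => ?_⟩
    have key : ∀ x : V, T.Reachable x v := by
      intro x
      by_cases hx : x = v
      · exact hx ▸ SimpleGraph.Reachable.refl x
      · exact ((hadj x v).2 ⟨hx, Or.inr rfl⟩).reachable
    exact (key a).trans (key b).symm
  · -- Acyclic
    rw [SimpleGraph.isAcyclic_iff_forall_adj_isBridge]
    intro a b hab
    rw [SimpleGraph.isBridge_iff]
    obtain ⟨h2, h1⟩ := (hadj a b).1 hab
    rcases h1 with rfl | rfl
    · -- edge a-b with a the hub
      apply no_reach (C := {x | x ≠ b}) ?_ (show a ∈ {x | x ≠ b} from h2) (by simp)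
      intro c d hcd hc
      simp only [Set.mem_setOf_eq] at hc ⊢
      intro hdb
      rw [SimpleGraph.deleteEdges, SimpleGraph.sdiff_adj, hadj] at hcd
      obtain ⟨⟨h4, h3⟩, h5⟩ := hcd
      apply h5
      rw [SimpleGraph.fromEdgeSet_adj]
      subst hdb
      refine ⟨?_, h4⟩
      rcases h3 with h3 | h3
      · rw [h3]; exact Set.mem_singleton _
      · simp_all
    · -- edge a-b with b the hub
      intro hr
      refine no_reach (C := {x | x ≠ a}) ?_ (show b ∈ {x | x ≠ a} from Ne.symm h2)
        (by simp) hr.symm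
      intro c d hcd hc
      simp only [Set.mem_setOf_eq] at hc ⊢
      intro hda
      rw [SimpleGraph.deleteEdges, SimpleGraph.sdiff_adj, hadj] at hcd
      obtain ⟨⟨h4, h3⟩, h5⟩ := hcd
      apply h5
      rw [SimpleGraph.fromEdgeSet_adj]
      subst hda
      refine ⟨?_, h4⟩
      rcases h3 with h3 | h3
      · rw [h3, Sym2.eq_swap]; exact Set.mem_singleton _
      · simp_all
  · -- degrees
    intro x
    by_cases hx : x = v
    · subst hx
      have hset : T.neighborSet x = ({x} : Set V)ᶜ := by
        ext y
        simp only [SimpleGraph.mem_neighborSet, hadj, Set.mem_compl_iff, Set.mem_singleton_iff]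
        constructor
        · rintro ⟨h1, -⟩; exact Ne.symm h1
        · intro h1; exact ⟨Ne.symm h1, by tauto⟩

      rw [hset]
      have := Set.ncard_add_ncard_compl ({x} : Set V)
      rw [Set.ncard_singleton] at this
      have h2 : Nat.card V = Fintype.card V := Nat.card_eq_fintype_card
      omega
    · have hset : T.neighborSet x = {v} := by
        ext y
        simp only [SimpleGraph.mem_neighborSet, hadj, Set.mem_singleton_iff]
        constructor
        · rintro ⟨h2, h1 | h1⟩
          · exact absurd h1 hx
          · exact h1
        · rintro rfl; exact ⟨hx, Or.inr rfl⟩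
      rw [hset, Set.ncard_singleton]
      omega


lemma treeA_hist (G : SimpleGraph V) (v u w x0 : V)
    (hvu : v ≠ u) (hwv : w ≠ v) (hwu : w ≠ u)
    (hx0u : x0 ≠ u) (hx0v : x0 ≠ v) (hx0w : x0 ≠ w)
    (hv : ∀ y, y ≠ v → y ≠ u → G.Adj v y)
    (hwuA : G.Adj w u) (hwxA : G.Adj w x0)
    (hcard : 7 ≤ Fintype.card V) : HasHIST G := by
  classical
  set rel : V → V → Prop := fun a b => (a = v ∧ b ≠ u ∧ b ≠ x0) ∨ (a = w ∧ (b = u ∨ b = x0))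
    with hrel
  set T : SimpleGraph V := SimpleGraph.fromRel rel with hT
  have hadj : ∀ a b, T.Adj a b ↔ a ≠ b ∧ (rel a b ∨ rel b a) := fun a b =>
    SimpleGraph.fromRel_adj rel a b
  have hTle : T ≤ G := by
    intro a b hab
    rw [hadj] at hab
    obtain ⟨hne, h | h⟩ := hab
    · rcases h with ⟨rfl, h1, h2⟩ | ⟨rfl, h1 | h1⟩
      · exact hv b (Ne.symm hne) h1
      · exact h1 ▸ hwuA
      · exact h1 ▸ hwxA
    · rcases h with ⟨rfl, h1, h2⟩ | ⟨rfl, h1 | h1⟩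
      · exact (hv a (hne) h1).symm
      · exact (h1 ▸ hwuA).symm
      · exact (h1 ▸ hwxA).symm
  have hAdjvw : T.Adj v w := by
    rw [hadj]
    exact ⟨Ne.symm hwv, Or.inl (Or.inl ⟨rfl, hwu, Ne.symm hx0w⟩)⟩
  have hAdjwu : T.Adj w u := by
    rw [hadj]; exact ⟨hwu, Or.inl (Or.inr ⟨rfl, Or.inl rfl⟩)⟩
  have hAdjwx : T.Adj w x0 := by
    rw [hadj]; exact ⟨Ne.symm hx0w, Or.inl (Or.inr ⟨rfl, Or.inr rfl⟩)⟩
  refine ⟨T, hTle, ⟨?_, ?_⟩, ?_⟩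
  · -- Connected
    have hne : Nonempty V := Fintype.card_pos_iff.mp (by omega)
    refine ⟨fun a b => ?_⟩
    have key : ∀ x : V, T.Reachable x v := by
      intro x
      by_cases hxv : x = v
      · exact hxv ▸ SimpleGraph.Reachable.refl x
      · by_cases hxu : x = u
        · subst hxu
          exact (hAdjwu.symm.reachable).trans (hAdjvw.symm.reachable)
        · by_cases hxx : x = x0
          · subst hxx
            exact (hAdjwx.symm.reachable).trans (hAdjvw.symm.reachable)
          · refine ((hadj x v).2 ⟨hxv, Or.inr (Or.inl ⟨rfl, hxu, ?_⟩)⟩).reachable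
            exact fun h => hxx (by rw [h])
    exact (key a).trans (key b).symm
  · -- Acyclic
    rw [SimpleGraph.isAcyclic_iff_forall_adj_isBridge]
    have H : ∀ a b, T.Adj a b → rel a b →
        ¬(T \ SimpleGraph.fromEdgeSet {s(a, b)}).Reachable a b := by
      intro a b hab hr
      have hne := ((hadj a b).1 hab).1
      have closure : ∀ (C : Set V), b ∈ C → a ∉ C →
          (∀ c d, (T \ SimpleGraph.fromEdgeSet {s(a, b)}).Adj c d → c ∈ C → d ∈ C) →
          ¬(T \ SimpleGraph.fromEdgeSet {s(a, b)}).Reachable a b := by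
        intro C hbC haC hcl hreach
        exact no_reach hcl hbC haC hreach.symm
      have hedge : ∀ c d, (T \ SimpleGraph.fromEdgeSet {s(a, b)}).Adj c d →
          (c ≠ d ∧ (rel c d ∨ rel d c)) ∧ ¬((c = a ∧ d = b) ∨ (c = b ∧ d = a)) := by
        intro c d hcd
        rw [SimpleGraph.sdiff_adj, hadj] at hcd
        obtain ⟨h1, h5⟩ := hcd
        refine ⟨h1, ?_⟩
        rw [← Sym2.eq_iff]
        intro he
        exact h5 ((SimpleGraph.fromEdgeSet_adj _).2 ⟨by rw [he]; exact rfl, h1.1⟩)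
      rcases hr with ⟨hav, hb1, hb2⟩ | ⟨haw, hb⟩
      · by_cases hbw : b = w
        · refine closure {z | z = w ∨ z = u ∨ z = x0} (by simp [hbw]) ?_ ?_
          · simp only [Set.mem_setOf_eq]
            push_neg
            refine ⟨fun h => hwv (hav.symm.trans h).symm, fun h => hvu (hav.symm.trans h),
              fun h => hx0v (hav.symm.trans h).symm⟩
          · intro c d hcd hc
            obtain ⟨⟨hcd1, hcd2⟩, hnotedge⟩ := hedge c d hcd
            simp only [Set.mem_setOf_eq] at hc ⊢
            rcases hc with hc | hc | hc
            · rcases hcd2 with (⟨h1, h2, h3⟩ | ⟨h1, h2⟩) | (⟨h1, h2, h3⟩ | ⟨h1, h2⟩)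
              · exact absurd (hc.symm.trans h1) hwv
              · rcases h2 with h2 | h2
                · exact Or.inr (Or.inl h2)
                · exact Or.inr (Or.inr h2)
              · exact absurd (Or.inr ⟨hc.trans hbw.symm, h1.trans hav.symm⟩) hnotedge
              · exact Or.inl h1
            · rcases hcd2 with (⟨h1, h2, h3⟩ | ⟨h1, h2⟩) | (⟨h1, h2, h3⟩ | ⟨h1, h2⟩)
              · exact absurd (hc.symm.trans h1) (Ne.symm hvu)
              · exact absurd (hc.symm.trans h1) (Ne.symm hwu)
              · exact absurd hc h2
              · exact Or.inl h1
            · rcases hcd2 with (⟨h1, h2, h3⟩ | ⟨h1, h2⟩) | (⟨h1, h2, h3⟩ | ⟨h1, h2⟩)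
              · exact absurd (hc.symm.trans h1) hx0v
              · exact absurd (hc.symm.trans h1) hx0w
              · exact absurd hc h3
              · exact Or.inl h1
        · refine closure {z | z = b} rfl (fun h => hne h) ?_
          intro c d hcd hc
          obtain ⟨⟨hcd1, hcd2⟩, hnotedge⟩ := hedge c d hcd
          simp only [Set.mem_setOf_eq] at hc ⊢
          rcases hcd2 with (⟨h1, h2, h3⟩ | ⟨h1, h2⟩) | (⟨h1, h2, h3⟩ | ⟨h1, h2⟩)
          · exact absurd (h1.symm.trans hc) (fun h => hne (hav.trans h))
          · exact absurd (hc.symm.trans h1) hbw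
          · exact absurd (Or.inr ⟨hc, h1.trans hav.symm⟩) hnotedge
          · rcases h2 with h2 | h2
            · exact absurd (hc.symm.trans h2) hb1
            · exact absurd (hc.symm.trans h2) hb2
      · rcases hb with hbu | hbx
        · refine closure {z | z = b} rfl (fun h => hne h) ?_
          intro c d hcd hc
          obtain ⟨⟨hcd1, hcd2⟩, hnotedge⟩ := hedge c d hcd
          simp only [Set.mem_setOf_eq] at hc ⊢
          rcases hcd2 with (⟨h1, h2, h3⟩ | ⟨h1, h2⟩) | (⟨h1, h2, h3⟩ | ⟨h1, h2⟩)
          · exact absurd ((h1.symm.trans hc).trans hbu) hvu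
          · exact absurd (haw.trans (h1.symm.trans hc)) hne
          · exact absurd (hc.trans hbu) h2
          · exact absurd (Or.inr ⟨hc, h1.trans haw.symm⟩) hnotedge
        · refine closure {z | z = b} rfl (fun h => hne h) ?_
          intro c d hcd hc
          obtain ⟨⟨hcd1, hcd2⟩, hnotedge⟩ := hedge c d hcd
          simp only [Set.mem_setOf_eq] at hc ⊢
          rcases hcd2 with (⟨h1, h2, h3⟩ | ⟨h1, h2⟩) | (⟨h1, h2, h3⟩ | ⟨h1, h2⟩)
          · exact absurd ((h1.symm.trans hc).trans hbx) (Ne.symm hx0v)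
          · exact absurd (haw.trans (h1.symm.trans hc)) hne
          · exact absurd (hc.trans hbx) h3
          · exact absurd (Or.inr ⟨hc, h1.trans haw.symm⟩) hnotedge
    intro a b hab
    rw [SimpleGraph.isBridge_iff]
    obtain ⟨hne, h | h⟩ := (hadj a b).1 hab
    · exact H a b hab h
    · intro hreach
      apply H b a hab.symm h
      rw [Sym2.eq_swap]
      exact hreach.symm
  · -- degrees
    intro x
    have hvux : v ∉ ({u, x0} : Set V) := by simp [hvu, Ne.symm hx0v]
    have hcard3 : ({v, u, x0} : Set V).ncard = 3 := by
      rw [Set.ncard_insert_of_notMem hvux, Set.ncard_pair (Ne.symm hx0u)]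
    by_cases hxv : x = v
    · subst hxv
      have hset : T.neighborSet x = ({x, u, x0} : Set V)ᶜ := by
        ext y
        simp only [SimpleGraph.mem_neighborSet, hadj, Set.mem_compl_iff, Set.mem_insert_iff,
          Set.mem_singleton_iff, hrel]
        constructor
        · rintro ⟨hne', (⟨h1, h2, h3⟩ | ⟨h1, h2⟩) | (⟨h1, h2, h3⟩ | ⟨h1, h2⟩)⟩
          · push_neg; exact ⟨Ne.symm hne', h2, h3⟩
          · exact absurd h1 (Ne.symm hwv)
          · exact absurd h1.symm hne'
          · rcases h2 with h2 | h2
            · exact absurd h2 hvu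
            · exact absurd h2 (Ne.symm hx0v)
        · intro h
          push_neg at h
          exact ⟨Ne.symm h.1, Or.inl (Or.inl ⟨by trivial, h.2.1, h.2.2⟩)⟩
      rw [hset]
      have := Set.ncard_add_ncard_compl ({x, u, x0} : Set V)
      rw [hcard3] at this
      have h2 : Nat.card V = Fintype.card V := Nat.card_eq_fintype_card
      omega
    · by_cases hxw : x = w
      · subst hxw
        have hset : T.neighborSet x = ({v, u, x0} : Set V) := by
          ext y
          simp only [SimpleGraph.mem_neighborSet, hadj, Set.mem_insert_iff,
            Set.mem_singleton_iff, hrel]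
          constructor
          · rintro ⟨hne', (⟨h1, h2, h3⟩ | ⟨h1, h2⟩) | (⟨h1, h2, h3⟩ | ⟨h1, h2⟩)⟩
            · exact absurd h1 hwv
            · rcases h2 with h2 | h2
              · exact Or.inr (Or.inl h2)
              · exact Or.inr (Or.inr h2)
            · exact Or.inl h1
            · exact absurd h1 (Ne.symm hne')
          · rintro (rfl | rfl | rfl)
            · exact ⟨hwv, Or.inr (Or.inl ⟨by trivial, hwu, Ne.symm hx0w⟩)⟩
            · exact ⟨hwu, Or.inl (Or.inr ⟨by trivial, Or.inl (by trivial)⟩)⟩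
            · exact ⟨Ne.symm hx0w, Or.inl (Or.inr ⟨by trivial, Or.inr (by trivial)⟩)⟩
        rw [hset, hcard3]
        omega
      · by_cases hxu : x = u
        · subst hxu
          have hset : T.neighborSet x = ({w} : Set V) := by
            ext y
            simp only [SimpleGraph.mem_neighborSet, hadj, Set.mem_singleton_iff, hrel]
            constructor
            · rintro ⟨hne', (⟨h1, h2, h3⟩ | ⟨h1, h2⟩) | (⟨h1, h2, h3⟩ | ⟨h1, h2⟩)⟩
              · exact absurd h1 (Ne.symm hvu)
              · exact absurd h1 (Ne.symm hwu)
              · exact absurd rfl h2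
              · exact h1
            · rintro rfl
              exact ⟨Ne.symm hwu, Or.inr (Or.inr ⟨by trivial, Or.inl (by trivial)⟩)⟩
          rw [hset, Set.ncard_singleton]
          omega
        · by_cases hxx : x = x0
          · subst hxx
            have hset : T.neighborSet x = ({w} : Set V) := by
              ext y
              simp only [SimpleGraph.mem_neighborSet, hadj, Set.mem_singleton_iff, hrel]
              constructor
              · rintro ⟨hne', (⟨h1, h2, h3⟩ | ⟨h1, h2⟩) | (⟨h1, h2, h3⟩ | ⟨h1, h2⟩)⟩
                · exact absurd h1 hx0v
                · exact absurd h1 hx0w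
                · exact absurd rfl h3
                · exact h1
              · rintro rfl
                exact ⟨hx0w, Or.inr (Or.inr ⟨by trivial, Or.inr (by trivial)⟩)⟩
            rw [hset, Set.ncard_singleton]
            omega
          · have hset : T.neighborSet x = ({v} : Set V) := by
              ext y
              simp only [SimpleGraph.mem_neighborSet, hadj, Set.mem_singleton_iff, hrel]
              constructor
              · rintro ⟨hne', (⟨h1, h2, h3⟩ | ⟨h1, h2⟩) | (⟨h1, h2, h3⟩ | ⟨h1, h2⟩)⟩
                · exact absurd h1 hxv
                · exact absurd h1 hxw
                · exact h1
                · rcases h2 with h2 | h2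
                  · exact absurd h2 hxu
                  · exact absurd h2 hxx
              · rintro rfl
                exact ⟨(by first | exact fun h => hxv h.symm | exact hxv), Or.inr (Or.inl ⟨by trivial, hxu, hxx⟩)⟩
            rw [hset, Set.ncard_singleton]
            omega

lemma keyineq (N K M lam r : ℝ) (hN : 7 ≤ N) (hK : 1 ≤ K) (hM : 0 ≤ M)
    (hKM : K + M = N - 2) (hr : r * (N - 3) = 1) (hrpos : 0 < r)
    (hlam : N - 3 + r ≤ lam) :
    M * (lam ^ 2 - K) < lam * (lam ^ 2 - 2 * K) * (lam + 1 - M) := by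
  have hN4 : 4 ≤ N - 3 := by linarith
  have hr4 : r ≤ 1 / 4 := by nlinarith
  have hlampos : 0 < lam := by linarith
  have hMN : M ≤ N - 3 := by linarith
  have h1 : K + r ≤ lam + 1 - M := by linarith
  have h2 : (N - 3) ^ 2 + 2 + r ^ 2 ≤ lam ^ 2 := by nlinarith
  have h3 : (N - 3) * (N - 5) + r ^ 2 ≤ lam ^ 2 - 2 * K := by nlinarith
  have h3' : 0 < lam ^ 2 - 2 * K := by nlinarith
  have h4 : 1 + r ^ 2 ≤ lam * r := by nlinarith
  have h5 : M * K ≤ (N - 2) ^ 2 / 4 := by nlinarith [sq_nonneg (K - M)]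
  have h6 : (N - 2) ^ 2 / 4 < (N - 3) * (N - 5) := by nlinarith [sq_nonneg (N - 7)]
  have h7 : M * K < lam * r * (lam ^ 2 - 2 * K) := by nlinarith
  have h8 : M * (lam ^ 2 - 2 * K) ≤ lam * K * (lam ^ 2 - 2 * K) := by
    have : M ≤ lam * K := by nlinarith
    nlinarith
  have h9 : lam * (lam ^ 2 - 2 * K) * (K + r) ≤ lam * (lam ^ 2 - 2 * K) * (lam + 1 - M) :=
    mul_le_mul_of_nonneg_left h1 (by positivity)
  calc M * (lam ^ 2 - K) = M * (lam ^ 2 - 2 * K) + M * K := by ring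
    _ < lam * K * (lam ^ 2 - 2 * K) + lam * r * (lam ^ 2 - 2 * K) := by linarith
    _ = lam * (lam ^ 2 - 2 * K) * (K + r) := by ring
    _ ≤ lam * (lam ^ 2 - 2 * K) * (lam + 1 - M) := h9


lemma caseB_contra (N K M lam A B WS SS : ℝ) (hN : 7 ≤ N) (hK : 1 ≤ K) (hM : 0 ≤ M)
    (hKM : K + M = N - 2) (hMN : M ≤ N - 3)
    (hlam : N - 3 + 1 / (N - 3) ≤ lam)
    (hA : 0 ≤ A) (hB : 0 < B) (hSS : 0 ≤ SS)
    (F1 : lam * A ≤ WS) (F2 : lam * WS ≤ K * (A + B)) (F3 : lam * B ≤ WS + SS)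
    (F4 : lam * SS ≤ M * B + M * SS - SS) : False := by
  set r : ℝ := 1 / (N - 3) with hrdef
  have hN4 : 4 ≤ N - 3 := by linarith
  have hrpos : 0 < r := by positivity
  have hr : r * (N - 3) = 1 := by
    rw [hrdef, div_mul_cancel₀ _ (by linarith : N - 3 ≠ 0)]
  have hlam' : N - 3 + r ≤ lam := hlam
  have key := keyineq N K M lam r hN hK hM hKM hr hrpos hlam'
  have hlampos : 0 < lam := by linarith
  have hlam2K : 0 < lam ^ 2 - 2 * K := by nlinarith
  have hlamK : 0 < lam ^ 2 - K := by linarith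
  have hM1 : 0 < lam + 1 - M := by linarith
  have P1 : (lam ^ 2 - K) * A ≤ K * B := by nlinarith [mul_le_mul_of_nonneg_left F1 hlampos.le]
  have P2 : (lam + 1 - M) * SS ≤ M * B := by linarith
  have P3 : lam ^ 2 * B ≤ K * (A + B) + lam * SS := by
    nlinarith [mul_le_mul_of_nonneg_left F3 hlampos.le]
  have c1 : lam ^ 2 * B * (lam ^ 2 - K) ≤ (K * (A + B) + lam * SS) * (lam ^ 2 - K) :=
    mul_le_mul_of_nonneg_right P3 hlamK.le
  have c2 : K * (A + B) * (lam ^ 2 - K) ≤ K * B * lam ^ 2 := by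
    nlinarith [mul_le_mul_of_nonneg_left P1 (by linarith : (0:ℝ) ≤ K)]
  have c3 : lam ^ 2 * B * (lam ^ 2 - K) ≤ K * B * lam ^ 2 + lam * SS * (lam ^ 2 - K) := by
    nlinarith
  have c4 : lam ^ 2 * B * (lam ^ 2 - K) * (lam + 1 - M) ≤
      K * B * lam ^ 2 * (lam + 1 - M) + lam * (lam ^ 2 - K) * ((lam + 1 - M) * SS) := by
    nlinarith [mul_le_mul_of_nonneg_right c3 hM1.le]
  have c5 : lam ^ 2 * B * (lam ^ 2 - K) * (lam + 1 - M) ≤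
      K * B * lam ^ 2 * (lam + 1 - M) + lam * (lam ^ 2 - K) * (M * B) := by
    nlinarith [mul_le_mul_of_nonneg_left P2 (by positivity : (0:ℝ) ≤ lam * (lam ^ 2 - K))]
  have c6 := mul_lt_mul_of_pos_left key (mul_pos hlampos hB)
  nlinarith [c5, c6]


end HISTAux

set_option maxHeartbeats 1000000 in
theorem hist_of_specRad_ge {V : Type*} [Fintype V] (G : SimpleGraph V) (n : ℕ)
    (hcard : Fintype.card V = n) (hn : 7 ≤ n) (hG : G.Connected)
    (hρ : (n : ℝ) - 3 + 1 / ((n : ℝ) - 3) ≤ specRad G) :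
    HasHIST G := by
  classical
  have hn4 : (4 : ℝ) ≤ (n : ℝ) - 3 := by
    have : (7:ℝ) ≤ (n:ℝ) := by exact_mod_cast hn
    linarith
  have hcpos : (0:ℝ) < (n : ℝ) - 3 + 1 / ((n : ℝ) - 3) := by positivity
  obtain ⟨lam, f, hlamge, hf0, hf⟩ := exists_eig_s15 G _ hcpos hρ
  have hlampos : (0:ℝ) < lam := lt_of_lt_of_le hcpos hlamge
  set g : V → ℝ := fun i => |f i| with hgdef
  have hg : ∀ i, lam * g i ≤ ∑ j ∈ G.neighborFinset i, g j := fun i =>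
    subeig G hlampos.le hf i
  have hgnn : ∀ i, 0 ≤ g i := fun i => abs_nonneg _
  obtain ⟨v, hgv, hgmax, hdeg⟩ := maxdeg G hf0 hlampos.le hf
  -- degree of v is n-1 or n-2
  have hrinv : (0:ℝ) < 1 / ((n : ℝ) - 3) := by positivity
  have hdegn : n - 2 ≤ G.degree v := by
    have h1 : ((n:ℝ) - 3) < (G.degree v : ℝ) := by linarith
    have h2 : (n : ℝ) - 3 < (G.degree v : ℝ) := h1
    have : n - 3 < G.degree v := by
      have hn3 : ((n - 3 : ℕ) : ℝ) = (n:ℝ) - 3 := by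
        have : (3:ℕ) ≤ n := by omega
        push_cast [this]
        ring
      exact_mod_cast hn3 ▸ h2
    omega
  have hdeglt : G.degree v < n := hcard ▸ G.degree_lt_card_verts v
  have hss : G.neighborFinset v ⊆ univ.erase v := by
    intro y hy
    rw [mem_erase]
    exact ⟨fun h => (G.mem_neighborFinset v y).1 hy |>.ne' (h ▸ rfl), mem_univ y⟩
  have herase_card : (univ.erase v).card = n - 1 := by
    rw [card_erase_of_mem (mem_univ v), card_univ, hcard]
  rcases (by omega : G.degree v = n - 1 ∨ G.degree v = n - 2) with hd | hd
  · -- star case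
    have heq : G.neighborFinset v = univ.erase v := by
      apply Finset.eq_of_subset_of_card_le hss
      rw [herase_card, SimpleGraph.card_neighborFinset_eq_degree, hd]
    apply star_hist G v
    · intro y hy
      have : y ∈ G.neighborFinset v := heq ▸ (mem_erase.2 ⟨hy, mem_univ y⟩)
      exact (G.mem_neighborFinset v y).1 this
    · omega
  · -- degree n-2
    have hsd_card : ((univ.erase v) \ G.neighborFinset v).card = 1 := by
      rw [card_sdiff_of_subset hss, herase_card, ← SimpleGraph.card_neighborFinset_eq_degree] at *
      omega
    obtain ⟨u, hu⟩ := Finset.card_eq_one.1 hsd_card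
    have huv : u ≠ v := by
      have : u ∈ (univ.erase v) \ G.neighborFinset v := hu ▸ mem_singleton_self u
      exact (mem_erase.1 (mem_sdiff.1 this).1).1
    have hnadj : ¬ G.Adj v u := by
      have : u ∈ (univ.erase v) \ G.neighborFinset v := hu ▸ mem_singleton_self u
      intro h
      exact (mem_sdiff.1 this).2 ((G.mem_neighborFinset v u).2 h)
    have huniq : ∀ y, y ≠ v → y ≠ u → G.Adj v y := by
      intro y hyv hyu
      by_contra h
      have : y ∈ (univ.erase v) \ G.neighborFinset v := by
        rw [mem_sdiff, mem_erase]
        exact ⟨⟨hyv, mem_univ y⟩, fun hm => h ((G.mem_neighborFinset v y).1 hm)⟩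
      rw [hu, mem_singleton] at this
      exact hyu this
    -- u has a neighbor
    have hW : ∃ w, G.Adj u w := by
      obtain ⟨p⟩ := hG.preconnected u v
      cases p with
      | nil => exact absurd rfl huv
      | cons h _ => exact ⟨_, h⟩
    by_cases hcaseA : ∃ w x, G.Adj u w ∧ G.Adj w x ∧ x ≠ u ∧ x ≠ v
    · obtain ⟨w, x, h1, h2, h3, h4⟩ := hcaseA
      have hwv : w ≠ v := by
        rintro rfl
        exact hnadj h1.symm
      exact treeA_hist G v u w x (Ne.symm huv) hwv h1.ne' h3 h4 h2.ne' huniq h1.symm h2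
        (by omega)
    · -- case B
      push_neg at hcaseA
      have hcaseB : ∀ w x, G.Adj u w → G.Adj w x → x = u ∨ x = v := by
        intro w x h1 h2
        by_contra h
        push_neg at h
        exact h.2 (hcaseA w x h1 h2 h.1)
      set W : Finset V := G.neighborFinset u with hWdef
      set S : Finset V := (univ \ {u, v}) \ W with hSdef
      have hvW : v ∉ W := fun h => hnadj ((G.mem_neighborFinset u v).1 h).symm
      have huW : u ∉ W := fun h => (G.mem_neighborFinset u u).1 h |>.ne rfl
      have hWuv : W ⊆ univ \ {u, v} := by
        intro y hy
        rw [mem_sdiff, mem_insert, mem_singleton]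
        push_neg
        exact ⟨mem_univ y, fun h => huW (by rwa [h] at hy), fun h => hvW (by rwa [h] at hy)⟩
      have hWS : W ∪ S = univ \ {u, v} := Finset.union_sdiff_of_subset hWuv
      have hdisj : Disjoint W S := Finset.disjoint_sdiff
      have huv_card : ({u, v} : Finset V).card = 2 := Finset.card_pair huv
      have hWScard : W.card + S.card = n - 2 := by
        rw [← Finset.card_union_of_disjoint hdisj, hWS, Finset.card_sdiff_of_subset (subset_univ _),
          card_univ, hcard, huv_card]
      have hWne : W.Nonempty := by
        obtain ⟨w, hw⟩ := hW
        exact ⟨w, (G.mem_neighborFinset u w).2 hw⟩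
      -- neighbor structure
      have hnbrw : ∀ w ∈ W, G.neighborFinset w = {u, v} := by
        intro w hw
        have hwu : G.Adj u w := (G.mem_neighborFinset u w).1 hw
        have hwv : w ≠ v := fun h => hvW (by rwa [h] at hw)
        ext x
        rw [G.mem_neighborFinset, mem_insert, mem_singleton]
        constructor
        · exact fun h => hcaseB w x hwu h
        · rintro (rfl | rfl)
          · exact hwu.symm
          · exact (huniq w hwv hwu.ne').symm
      have hnbrv : G.neighborFinset v = W ∪ S := by
        rw [hWS]
        ext x
        rw [G.mem_neighborFinset, mem_sdiff, mem_insert, mem_singleton]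
        constructor
        · intro h
          exact ⟨mem_univ x, by push_neg; exact ⟨fun hx => hnadj (by rwa [hx] at h), fun hx => G.loopless.irrefl v (by rwa [hx] at h)⟩⟩
        · rintro ⟨-, hx⟩
          push_neg at hx
          exact huniq x hx.2 hx.1
      have hnbrs : ∀ s ∈ S, G.neighborFinset s ⊆ insert v (S.erase s) := by
        intro s hs
        rw [hSdef, mem_sdiff, mem_sdiff, mem_insert, mem_singleton] at hs
        obtain ⟨⟨-, hs1⟩, hs2⟩ := hs
        push_neg at hs1
        intro x hx
        have hadjsx : G.Adj s x := (G.mem_neighborFinset s x).1 hx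
        rw [mem_insert]
        by_cases hxv : x = v
        · exact Or.inl hxv
        · refine Or.inr (mem_erase.2 ⟨Ne.symm hadjsx.ne, ?_⟩)
          · rw [hSdef, mem_sdiff, mem_sdiff, mem_insert, mem_singleton]
            have hxu : x ≠ u := by
              intro hxu
              rw [hxu] at hadjsx
              exact hs2 ((G.mem_neighborFinset u s).2 hadjsx.symm)
            have hxW : x ∉ W := by
              intro hxW
              rcases hcaseB x s ((G.mem_neighborFinset u x).1 hxW) hadjsx.symm with h | h
              · exact hs1.1 h
              · exact hs1.2 h
            exact ⟨⟨mem_univ x, by push_neg; exact ⟨hxu, hxv⟩⟩, hxW⟩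
      -- sums
      set A := g u with hA
      set B := g v with hB
      set WS := ∑ w ∈ W, g w with hWSdef
      set SS := ∑ s ∈ S, g s with hSSdef
      set k := W.card with hk
      set m := S.card with hm
      have hWSnn : 0 ≤ WS := Finset.sum_nonneg fun i _ => hgnn i
      have hSSnn : 0 ≤ SS := Finset.sum_nonneg fun i _ => hgnn i
      have F1 : lam * A ≤ WS := hg u
      have F2 : lam * WS ≤ (k : ℝ) * (A + B) := by
        rw [hWSdef, Finset.mul_sum]
        calc ∑ w ∈ W, lam * g w ≤ ∑ w ∈ W, (A + B) := by
              apply Finset.sum_le_sum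
              intro w hw
              have := hg w
              rwa [hnbrw w hw, Finset.sum_pair huv] at this
          _ = (k : ℝ) * (A + B) := by rw [Finset.sum_const, nsmul_eq_mul]
      have F3 : lam * B ≤ WS + SS := by
        have := hg v
        rwa [hnbrv, Finset.sum_union hdisj] at this
      have F4 : lam * SS ≤ (m : ℝ) * B + (m : ℝ) * SS - SS := by
        rw [hSSdef, Finset.mul_sum]
        calc ∑ s ∈ S, lam * g s ≤ ∑ s ∈ S, (B + (SS - g s)) := by
              apply Finset.sum_le_sum
              intro s hs
              have h1 := hg s
              have h2 : ∑ j ∈ G.neighborFinset s, g j ≤ ∑ j ∈ insert v (S.erase s), g j :=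
                Finset.sum_le_sum_of_subset_of_nonneg (hnbrs s hs) (fun i _ _ => hgnn i)
              have hvS : v ∉ S := by
                simp [hSdef]
              have h3 : ∑ j ∈ insert v (S.erase s), g j = B + (SS - g s) := by
                rw [Finset.sum_insert (fun h => hvS (Finset.mem_of_mem_erase h)),
                  Finset.sum_erase_eq_sub hs]
              linarith
          _ = (m : ℝ) * B + (m : ℝ) * SS - SS := by
              rw [Finset.sum_add_distrib, Finset.sum_const, Finset.sum_sub_distrib,
                Finset.sum_const, nsmul_eq_mul, nsmul_eq_mul, ← hSSdef]
              ring
      have hk1 : 1 ≤ k := Finset.card_pos.2 hWne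
      have hkm : k + m = n - 2 := hWScard
      have hmn : m ≤ n - 3 := by omega
      -- show B > 0
      have hBpos : 0 < B := by
        rcases lt_or_eq_of_le (hgnn v) with h | h
        · exact h
        · exfalso
          have hB0 : B = 0 := h.symm
          have hk2 : (k : ℝ) < lam ^ 2 := by
            have h1 : (k : ℝ) ≤ (n : ℝ) - 2 := by
              have : k ≤ n - 2 := by omega
              have h2 : ((n - 2 : ℕ) : ℝ) = (n:ℝ) - 2 := by
                have : (2:ℕ) ≤ n := by omega
                push_cast [this]; ring
              calc (k:ℝ) ≤ ((n-2 : ℕ) : ℝ) := by exact_mod_cast this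
                _ = (n:ℝ) - 2 := h2
            nlinarith
          have hA0 : A = 0 := by
            have := mul_le_mul_of_nonneg_left F1 hlampos.le
            have h2 : lam * (lam * A) ≤ (k:ℝ) * (A + B) := le_trans this F2
            rw [hB0] at h2
            nlinarith [hgnn u]
          have hWS0 : WS = 0 := by
            have h2 : lam * WS ≤ 0 := by rw [← hA0, ← hB0] at *; nlinarith [F2]
            nlinarith
          have hSS0 : SS = 0 := by
            have hm1 : (m : ℝ) ≤ (n:ℝ) - 3 := by
              have h2 : ((n - 3 : ℕ) : ℝ) = (n:ℝ) - 3 := by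
                have : (3:ℕ) ≤ n := by omega
                push_cast [this]; ring
              calc (m:ℝ) ≤ ((n-3:ℕ):ℝ) := by exact_mod_cast hmn
                _ = (n:ℝ) - 3 := h2
            have hpos : 0 < lam + 1 - (m:ℝ) := by linarith
            nlinarith [F4]
          -- all of g is zero
          apply hf0
          funext y
          have hgy : g y = 0 := by
            by_cases h1 : y = u
            · rw [h1]; exact hA0
            · by_cases h2 : y = v
              · rw [h2]; exact hB0
              · by_cases h3 : y ∈ W
                · have := Finset.sum_eq_zero_iff_of_nonneg (fun i _ => hgnn i) |>.1 hWS0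
                  exact this y h3
                · have hyS : y ∈ S := by
                    rw [hSdef, mem_sdiff, mem_sdiff, mem_insert, mem_singleton]
                    exact ⟨⟨mem_univ y, by push_neg; exact ⟨h1, h2⟩⟩, h3⟩
                  have := Finset.sum_eq_zero_iff_of_nonneg (fun i _ => hgnn i) |>.1 hSS0
                  exact this y hyS
          have : |f y| = 0 := hgy
          simpa using this
      -- final contradiction
      have hkR : (1:ℝ) ≤ (k:ℝ) := by exact_mod_cast hk1
      have hmR : (0:ℝ) ≤ (m:ℝ) := Nat.cast_nonneg m
      have hkmR : (k:ℝ) + (m:ℝ) = (n:ℝ) - 2 := by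
        have h2 : ((n - 2 : ℕ) : ℝ) = (n:ℝ) - 2 := by
          have : (2:ℕ) ≤ n := by omega
          push_cast [this]; ring
        rw [← h2]
        exact_mod_cast hkm
      have hmnR : (m:ℝ) ≤ (n:ℝ) - 3 := by
        have h2 : ((n - 3 : ℕ) : ℝ) = (n:ℝ) - 3 := by
          have : (3:ℕ) ≤ n := by omega
          push_cast [this]; ring
        rw [← h2]
        exact_mod_cast hmn
      have hnR : (7:ℝ) ≤ (n:ℝ) := by exact_mod_cast hn
      exact (caseB_contra (n:ℝ) (k:ℝ) (m:ℝ) lam A B WS SS hnR hkR hmR hkmR hmnR hlamge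
        (hgnn u) hBpos hSSnn F1 F2 F3 F4).elim
end
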